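/- arXiv:2507.12576 — 6 statements merged into one kernel-verified Lean document; each statement's English description precedes it below -/
import Mathlib

section
/- There exists an entire function S : ℂ → ℂ such that: (i) the zero set of S is exactly {tₙ : n ∈ ℕ}; (ii) every zero of S is simple (i.e., S'(tₙ) ≠ 0 for all n); (iii) conj(S(conj z)) = S(z) for all z ∈ ℂ; and (iv) the series ∑ₙ 1/(|S'(tₙ)|² μₙ) converges. -/
/-!
On the disc `‖w‖ ≤ 1/2` the Weierstrass elementary factor `E_n(w)` is `exp` of a function of
size at most `2⁻ⁿ`. Hence, for any sequence with `‖a n‖ → ∞`, on each disc the canonical product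
`∏ E_n(z / a n)` is a finite product times the exponential of a uniformly convergent series of
holomorphic functions: it is entire, vanishes exactly at the `a n`, simply if they are distinct,
and is real on `ℝ` when they are real.

Multiplying by `exp φ` keeps the zeros and multiplies `S'(t n)` by `exp (φ (t n))`. The series
`φ z = ∑ (2 (z² + 1) / (t n² + 1)) ^ p n` converges locally uniformly as soon as `n ≤ p n`, its
terms are nonnegative on `ℝ`, and the `n`-th one equals `2 ^ p n` at `t n`; choosing `p n` large
makes `|S'(t n)|² μ n ≥ 2ⁿ`.
-/

open Complex ComplexConjugate Filter Finset Metric Topology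

lemma HasDerivAt.mul_of_eq_zero {𝕜 : Type*} [NontriviallyNormedField 𝕜] {f g : 𝕜 → 𝕜}
    {f' x : 𝕜} (hf : HasDerivAt f f' x) (hfx : f x = 0) (hg : DifferentiableAt 𝕜 g x) :
    HasDerivAt (fun z => f z * g z) (f' * g x) x := by
  simpa [hfx] using hf.fun_mul hg.hasDerivAt

namespace Complex

lemma differentiable_logTaylor (n : ℕ) : Differentiable ℂ (logTaylor n) := by
  unfold logTaylor; fun_prop

lemma conj_logTaylor (n : ℕ) (z : ℂ) : conj (logTaylor n (conj z)) = logTaylor n z := by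
  simp [logTaylor]

/-- The Weierstrass elementary factor `E_p(w) = (1 - w) exp (w + w² / 2 + ⋯ + w ^ p / p)`. -/
noncomputable def weierstrassFactor (p : ℕ) (w : ℂ) : ℂ :=
  (1 - w) * exp (-logTaylor (p + 1) (-w))

noncomputable def weierstrassLog (p : ℕ) (w : ℂ) : ℂ :=
  log (1 - w) - logTaylor (p + 1) (-w)

variable {p : ℕ} {w : ℂ}

lemma differentiable_weierstrassFactor (p : ℕ) : Differentiable ℂ (weierstrassFactor p) :=
  (differentiable_id.const_sub 1).mul
    ((differentiable_logTaylor _).comp differentiable_neg).neg.cexp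

lemma weierstrassFactor_eq_zero_iff : weierstrassFactor p w = 0 ↔ w = 1 := by
  rw [weierstrassFactor, mul_eq_zero, or_iff_left (exp_ne_zero _), sub_eq_zero, eq_comm]

lemma conj_weierstrassFactor : conj (weierstrassFactor p (conj w)) = weierstrassFactor p w := by
  have h : conj (logTaylor (p + 1) (-conj w)) = logTaylor (p + 1) (-w) := by
    rw [← map_neg, conj_logTaylor]
  simp [weierstrassFactor, ← exp_conj, h]

lemma hasDerivAt_weierstrassFactor_one :
    HasDerivAt (weierstrassFactor p) (-exp (-logTaylor (p + 1) (-1))) 1 := by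
  have h : HasDerivAt (fun w : ℂ => (1 - w) * exp (-logTaylor (p + 1) (-w)))
      (-1 * exp (-logTaylor (p + 1) (-1))) 1 :=
    ((hasDerivAt_id' 1).const_sub 1).mul_of_eq_zero (sub_self 1)
      (((differentiable_logTaylor _).comp differentiable_neg).neg.cexp 1)
  rw [neg_one_mul] at h
  exact h

lemma weierstrassFactor_eq_exp (hw : ‖w‖ < 1) :
    weierstrassFactor p w = exp (weierstrassLog p w) := by
  have h : 1 - w ≠ 0 := fun h => by simp [← sub_eq_zero.mp h] at hw
  rw [weierstrassFactor, weierstrassLog, sub_eq_add_neg (log _), exp_add, exp_log h]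

lemma differentiableAt_weierstrassLog (hw : ‖w‖ < 1) : DifferentiableAt ℂ (weierstrassLog p) w := by
  have h : 1 - w ∈ slitPlane := by
    simpa [sub_eq_add_neg] using mem_slitPlane_of_norm_lt_one (z := -w) (by simpa using hw)
  exact ((differentiableAt_log h).comp w (differentiableAt_id.const_sub 1)).sub
    ((differentiable_logTaylor _).comp differentiable_neg w)

lemma norm_weierstrassLog_le (hw : ‖w‖ ≤ 1 / 2) : ‖weierstrassLog p w‖ ≤ (1 / 2) ^ p := by
  have hw' : ‖-w‖ < 1 := by rw [norm_neg]; linarith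
  have hinv : (1 - ‖-w‖)⁻¹ ≤ 2 := by
    rw [norm_neg, inv_le_comm₀ (by linarith) two_pos]; linarith
  calc ‖weierstrassLog p w‖ ≤ ‖-w‖ ^ (p + 1) * (1 - ‖-w‖)⁻¹ / (p + 1) := by
        simpa [weierstrassLog, sub_eq_add_neg] using norm_log_sub_logTaylor_le p hw'
    _ ≤ (1 / 2) ^ (p + 1) * 2 / 1 := by
        gcongr
        · rw [norm_neg]; exact hw
        · linarith [(p.cast_nonneg : (0 : ℝ) ≤ p)]
    _ = (1 / 2) ^ p := by ring

end Complex

lemma summable_half_pow_add (N : ℕ) : Summable fun n : ℕ => (1 / 2 : ℝ) ^ (n + N) :=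
  (summable_nat_add_iff N).2 summable_geometric_two

section CanonicalProduct

variable {a : ℕ → ℂ} {m n N : ℕ} {R : ℝ} {z : ℂ}

noncomputable def canonicalProductFactor (a : ℕ → ℂ) (n : ℕ) (z : ℂ) : ℂ :=
  if a n = 0 then z else weierstrassFactor n (z / a n)

noncomputable def canonicalProduct (a : ℕ → ℂ) (z : ℂ) : ℂ :=
  ∏' n, canonicalProductFactor a n z

noncomputable def canonicalProductTail (a : ℕ → ℂ) (N : ℕ) (z : ℂ) : ℂ :=
  ∑' n, weierstrassLog (n + N) (z / a (n + N))

lemma differentiable_canonicalProductFactor (a : ℕ → ℂ) (n : ℕ) :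
    Differentiable ℂ (canonicalProductFactor a n) := by
  unfold canonicalProductFactor
  split_ifs
  · exact differentiable_id
  · exact (differentiable_weierstrassFactor n).comp (differentiable_id.div_const _)

lemma canonicalProductFactor_eq_zero_iff : canonicalProductFactor a n z = 0 ↔ z = a n := by
  unfold canonicalProductFactor
  split_ifs with h
  · rw [h]
  · rw [weierstrassFactor_eq_zero_iff, div_eq_one_iff_eq h]

lemma deriv_canonicalProductFactor_ne_zero (a : ℕ → ℂ) (n : ℕ) :
    deriv (canonicalProductFactor a n) (a n) ≠ 0 := by
  by_cases h : a n = 0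
  · have hid : canonicalProductFactor a n = id := funext fun z => if_pos h
    simp [hid]
  · have hcomp : canonicalProductFactor a n = fun z => weierstrassFactor n (z / a n) :=
      funext fun z => if_neg h
    have hW : HasDerivAt (weierstrassFactor n) (-exp (-logTaylor (n + 1) (-1))) (a n / a n) := by
      rw [div_self h]; exact hasDerivAt_weierstrassFactor_one
    have hdiv : HasDerivAt (fun z => z / a n) (1 / a n) (a n) := (hasDerivAt_id' _).div_const _
    have hd : HasDerivAt (fun z => weierstrassFactor n (z / a n)) _ (a n) :=
      HasDerivAt.comp (h := fun z => z / a n) (a n) hW hdiv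
    rw [hcomp, hd.deriv]
    simp [h, exp_ne_zero]

lemma conj_canonicalProductFactor (ha : conj (a n) = a n) :
    conj (canonicalProductFactor a n (conj z)) = canonicalProductFactor a n z := by
  unfold canonicalProductFactor
  split_ifs
  · exact conj_conj z
  · rw [← ha, ← map_div₀, conj_weierstrassFactor, ha]

section Tail

variable (hN : ∀ n ≥ N, 2 * R ≤ ‖a n‖)
include hN

lemma ne_zero_and_norm_div_le_half (hz : ‖z‖ < R) (hn : N ≤ n) :
    a n ≠ 0 ∧ ‖z / a n‖ ≤ 1 / 2 := by
  have h := hN n hn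
  have ha : 0 < ‖a n‖ := by linarith [norm_nonneg z]
  refine ⟨norm_pos_iff.mp ha, ?_⟩
  rw [norm_div, div_le_iff₀ ha]
  linarith

lemma index_lt_of_norm_lt (hm : ‖a m‖ < R) : m < N := by
  by_contra! h
  linarith [hN m h, norm_nonneg (a m)]

lemma norm_weierstrassLog_div_le (hz : ‖z‖ < R) (n : ℕ) :
    ‖weierstrassLog (n + N) (z / a (n + N))‖ ≤ (1 / 2) ^ (n + N) :=
  norm_weierstrassLog_le (ne_zero_and_norm_div_le_half hN hz (N.le_add_left n)).2

lemma differentiableOn_canonicalProductTail :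
    DifferentiableOn ℂ (canonicalProductTail a N) (ball 0 R) := by
  refine differentiableOn_tsum_of_summable_norm (summable_half_pow_add N) (fun n z hz => ?_)
    isOpen_ball fun n z hz => norm_weierstrassLog_div_le hN (by simpa using hz) n
  have hw := (ne_zero_and_norm_div_le_half hN (by simpa using hz) (N.le_add_left n)).2
  exact ((differentiableAt_weierstrassLog (by linarith)).comp z
    (differentiableAt_id.div_const _)).differentiableWithinAt

lemma hasProd_canonicalProductFactor (hz : ‖z‖ < R) :
    HasProd (canonicalProductFactor a · z)
      ((∏ n ∈ range N, canonicalProductFactor a n z) * exp (canonicalProductTail a N z)) := by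
  have hs : HasSum (fun n => weierstrassLog (n + N) (z / a (n + N)))
      (canonicalProductTail a N z) :=
    (Summable.of_norm_bounded (summable_half_pow_add N) (norm_weierstrassLog_div_le hN hz)).hasSum
  have htail : HasProd (fun n => canonicalProductFactor a (n + N) z)
      (exp (canonicalProductTail a N z)) := by
    have heq : (fun n => canonicalProductFactor a (n + N) z) =
        exp ∘ fun n => weierstrassLog (n + N) (z / a (n + N)) := by
      funext n
      obtain ⟨h0, hw⟩ := ne_zero_and_norm_div_le_half hN hz (N.le_add_left n)
      rw [canonicalProductFactor, if_neg h0, weierstrassFactor_eq_exp (by linarith),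
        Function.comp_apply]
    rw [heq]
    exact hs.cexp
  exact htail.prod_range_mul (f := (canonicalProductFactor a · z))

lemma canonicalProduct_eqOn :
    Set.EqOn (canonicalProduct a)
      (fun z => (∏ n ∈ range N, canonicalProductFactor a n z) * exp (canonicalProductTail a N z))
      (ball 0 R) :=
  fun _ hz => (hasProd_canonicalProductFactor hN (by simpa using hz)).tprod_eq

end Tail

variable (ha : Tendsto (fun n => ‖a n‖) atTop atTop)
include ha

lemma exists_forall_ge_two_mul_le_norm (R : ℝ) : ∃ N, ∀ n ≥ N, 2 * R ≤ ‖a n‖ :=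
  eventually_atTop.mp (ha.eventually_ge_atTop _)

lemma differentiable_canonicalProduct : Differentiable ℂ (canonicalProduct a) := by
  intro z
  obtain ⟨N, hN⟩ := exists_forall_ge_two_mul_le_norm ha (‖z‖ + 1)
  have hD := (DifferentiableOn.fun_finsetProd (u := range N) fun n _ =>
    (differentiable_canonicalProductFactor a n).differentiableOn).mul
      (differentiableOn_canonicalProductTail hN).cexp
  exact (hD.congr (canonicalProduct_eqOn hN)).differentiableAt
    (isOpen_ball.mem_nhds (by simp))

lemma canonicalProduct_eq_zero_iff : canonicalProduct a z = 0 ↔ ∃ n, z = a n := by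
  obtain ⟨N, hN⟩ := exists_forall_ge_two_mul_le_norm ha (‖z‖ + 1)
  rw [canonicalProduct_eqOn hN (by simp : z ∈ ball 0 (‖z‖ + 1)), mul_eq_zero,
    or_iff_left (exp_ne_zero _), prod_eq_zero_iff]
  constructor
  · rintro ⟨n, -, hn⟩
    exact ⟨n, canonicalProductFactor_eq_zero_iff.mp hn⟩
  · rintro ⟨n, rfl⟩
    exact ⟨n, mem_range.mpr (index_lt_of_norm_lt hN (by linarith)),
      canonicalProductFactor_eq_zero_iff.mpr rfl⟩

lemma deriv_canonicalProduct_ne_zero (hinj : Function.Injective a) (m : ℕ) :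
    deriv (canonicalProduct a) (a m) ≠ 0 := by
  obtain ⟨N, hN⟩ := exists_forall_ge_two_mul_le_norm ha (‖a m‖ + 1)
  have hm : m ∈ range N := mem_range.mpr (index_lt_of_norm_lt hN (by linarith))
  set G : ℂ → ℂ := fun z =>
    (∏ n ∈ (range N).erase m, canonicalProductFactor a n z) * exp (canonicalProductTail a N z)
  have hball : ball (0 : ℂ) (‖a m‖ + 1) ∈ 𝓝 (a m) := isOpen_ball.mem_nhds (by simp)
  have hEq : canonicalProduct a =ᶠ[𝓝 (a m)] fun z => canonicalProductFactor a m z * G z := by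
    filter_upwards [hball] with z hz
    rw [canonicalProduct_eqOn hN hz]
    simp only [G, ← mul_prod_erase _ _ hm, mul_assoc]
  have hG : DifferentiableAt ℂ G (a m) :=
    (DifferentiableAt.fun_finsetProd fun n _ => differentiable_canonicalProductFactor a n _).mul
      ((differentiableOn_canonicalProductTail hN).differentiableAt hball).cexp
  rw [hEq.deriv_eq, (((differentiable_canonicalProductFactor a m _).hasDerivAt).mul_of_eq_zero
    (canonicalProductFactor_eq_zero_iff.mpr rfl) hG).deriv]
  refine mul_ne_zero (deriv_canonicalProductFactor_ne_zero a m) (mul_ne_zero ?_ (exp_ne_zero _))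
  refine prod_ne_zero_iff.mpr fun n hn h => ne_of_mem_erase hn (hinj ?_).symm
  exact canonicalProductFactor_eq_zero_iff.mp h

lemma conj_canonicalProduct (hreal : ∀ n, conj (a n) = a n) (z : ℂ) :
    conj (canonicalProduct a (conj z)) = canonicalProduct a z := by
  obtain ⟨N, hN⟩ := exists_forall_ge_two_mul_le_norm ha (‖z‖ + 1)
  have hP := hasProd_canonicalProductFactor hN (z := conj z) (by simp)
  have hconjP := hP.map (starRingEnd ℂ) continuous_conj
  simp only [Function.comp_def, conj_canonicalProductFactor (hreal _)] at hconjP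
  unfold canonicalProduct
  rw [hconjP.tprod_eq, hP.tprod_eq]

end CanonicalProduct

section GrowthFunction

variable {t : ℕ → ℝ} {p : ℕ → ℕ} {n : ℕ} {R : ℝ} {z : ℂ}

noncomputable def growthTerm (t : ℕ → ℝ) (p : ℕ → ℕ) (n : ℕ) (z : ℂ) : ℂ :=
  (2 * (z ^ 2 + 1) / ((t n : ℂ) ^ 2 + 1)) ^ p n

noncomputable def growthFunction (t : ℕ → ℝ) (p : ℕ → ℕ) (z : ℂ) : ℂ :=
  ∑' n, growthTerm t p n z

lemma growthTerm_ofReal (x : ℝ) :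
    growthTerm t p n x = ((2 * (x ^ 2 + 1) / (t n ^ 2 + 1)) ^ p n : ℝ) := by
  simp [growthTerm]

lemma growthTerm_self : growthTerm t p n (t n) = 2 ^ p n := by
  rw [growthTerm, mul_div_assoc, div_self (by exact_mod_cast (by positivity : t n ^ 2 + 1 ≠ 0)),
    mul_one]

lemma conj_growthTerm : conj (growthTerm t p n (conj z)) = growthTerm t p n z := by
  simp [growthTerm, map_ofNat]

lemma norm_growthTerm_le (hz : ‖z‖ ≤ R) :
    ‖growthTerm t p n z‖ ≤ (2 * (R ^ 2 + 1) / (t n ^ 2 + 1)) ^ p n := by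
  have hden : ‖(t n : ℂ) ^ 2 + 1‖ = t n ^ 2 + 1 := by
    rw [show (t n : ℂ) ^ 2 + 1 = ((t n ^ 2 + 1 : ℝ) : ℂ) by push_cast; rfl, norm_real,
      Real.norm_of_nonneg (by positivity)]
  have hnum : ‖z ^ 2 + 1‖ ≤ R ^ 2 + 1 := by
    refine (norm_add_le _ _).trans ?_
    rw [norm_pow, norm_one]
    gcongr
  rw [growthTerm, norm_pow, norm_div, norm_mul, hden, Complex.norm_two]
  gcongr

lemma summable_growthBound (ht : Tendsto (fun n => |t n|) atTop atTop) (hp : ∀ n, n ≤ p n)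
    (R : ℝ) : Summable fun n => (2 * (R ^ 2 + 1) / (t n ^ 2 + 1)) ^ p n := by
  refine Summable.of_norm_bounded_eventually_nat summable_geometric_two ?_
  filter_upwards [ht.eventually_ge_atTop (4 * (R ^ 2 + 1))] with n hn
  have hhalf : 2 * (R ^ 2 + 1) / (t n ^ 2 + 1) ≤ 1 / 2 := by
    rw [div_le_iff₀ (by positivity)]
    nlinarith [sq_abs (t n), sq_nonneg R]
  rw [Real.norm_of_nonneg (by positivity)]
  calc _ ≤ (1 / 2 : ℝ) ^ p n := by gcongr
    _ ≤ (1 / 2) ^ n := pow_le_pow_of_le_one (by norm_num) (by norm_num) (hp n)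

variable (ht : Tendsto (fun n => |t n|) atTop atTop) (hp : ∀ n, n ≤ p n)
include ht hp

lemma differentiable_growthFunction : Differentiable ℂ (growthFunction t p) := by
  intro z
  have hterm (n : ℕ) : Differentiable ℂ (growthTerm t p n) := by
    unfold growthTerm; fun_prop
  exact (differentiableOn_tsum_of_summable_norm (summable_growthBound ht hp (‖z‖ + 1))
    (fun n => (hterm n).differentiableOn) isOpen_ball
    fun n w hw => norm_growthTerm_le (mem_ball_zero_iff.mp hw).le).differentiableAt
    (isOpen_ball.mem_nhds (by simp : z ∈ ball (0 : ℂ) (‖z‖ + 1)))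

lemma le_re_growthFunction (m : ℕ) : (2 : ℝ) ^ p m ≤ (growthFunction t p (t m)).re := by
  have hs : Summable fun n => growthTerm t p n (t m) :=
    .of_norm_bounded (summable_growthBound ht hp ‖(t m : ℂ)‖) fun n => norm_growthTerm_le le_rfl
  rw [growthFunction, re_tsum hs]
  calc (2 : ℝ) ^ p m = (growthTerm t p m (t m)).re := by rw [growthTerm_self]; norm_cast
    _ ≤ ∑' n, (growthTerm t p n (t m)).re :=
      (reCLM.summable hs).le_tsum m fun n _ => by
        rw [reCLM_apply, growthTerm_ofReal, ofReal_re]; positivity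

end GrowthFunction

lemma conj_growthFunction {t : ℕ → ℝ} {p : ℕ → ℕ} (z : ℂ) :
    conj (growthFunction t p (conj z)) = growthFunction t p z := by
  simp only [growthFunction, conj_tsum, conj_growthTerm]

theorem exists_differentiable_conj_invariant_le_re {t : ℕ → ℝ}
    (ht : Tendsto (fun n => |t n|) atTop atTop) (c : ℕ → ℝ) :
    ∃ φ : ℂ → ℂ, Differentiable ℂ φ ∧ (∀ z, conj (φ (conj z)) = φ z) ∧
      ∀ n, c n ≤ (φ (t n)).re := by
  have hp : ∀ n, n ≤ n + ⌈c n⌉₊ := fun n => n.le_add_right _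
  refine ⟨growthFunction t _, differentiable_growthFunction ht hp, conj_growthFunction,
    fun n => (le_re_growthFunction ht hp n).trans' ?_⟩
  calc c n ≤ ⌈c n⌉₊ := Nat.le_ceil _
    _ ≤ (2 : ℝ) ^ ⌈c n⌉₊ := by exact_mod_cast Nat.lt_two_pow_self.le
    _ ≤ 2 ^ (n + ⌈c n⌉₊) := pow_le_pow_right₀ one_le_two (Nat.le_add_left _ _)

lemma tendsto_atTop_of_finite_setOf_le {f : ℕ → ℝ} (hf : ∀ R, {n | f n ≤ R}.Finite) :
    Tendsto f atTop atTop := by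
  rw [← Nat.cofinite_eq_atTop, Filter.tendsto_atTop]
  exact fun R => eventually_cofinite.mpr ((hf R).subset fun n hn => (not_le.mp hn).le)

lemma summable_one_div_exp_sq_mul {A x : ℕ → ℝ} (hA : ∀ n, 0 < A n)
    (hx : ∀ n, 2 ^ n / A n ≤ x n) : Summable fun n => 1 / (Real.exp (x n) ^ 2 * A n) := by
  refine Summable.of_nonneg_of_le (fun n => by have := hA n; positivity) (fun n => ?_)
    summable_geometric_two
  have hxpos : 0 < x n := (div_pos (by positivity) (hA n)).trans_le (hx n)
  have hexp : x n ≤ Real.exp (x n) ^ 2 := by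
    nlinarith [Real.add_one_le_exp (x n), Real.one_le_exp hxpos.le]
  have h2n := (div_le_iff₀ (hA n)).mp (hx n)
  rw [one_div_pow, one_div_le_one_div (by have := hA n; positivity) (by positivity)]
  nlinarith [hA n]

/-- **Lemma.** Given a sequence `{tₙ}` of distinct real numbers whose range is an
infinite discrete subset of `ℝ`, and positive weights `μₙ > 0`, there exists an
entire function `S` whose zero set is exactly `{tₙ}`, all of whose zeros are
simple, which is real-symmetric (`S* = S`), and such that
`∑ₙ 1/(|S'(tₙ)|² μₙ) < ∞`. -/
theorem exists_entire_with_summable_reciprocal_derivatives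
    (t : ℕ → ℝ) (ht : Function.Injective t)
    (hdisc : ∀ R : ℝ, {n : ℕ | |t n| ≤ R}.Finite)
    (μ : ℕ → ℝ) (hμ : ∀ n, 0 < μ n) :
    ∃ S : ℂ → ℂ,
      Differentiable ℂ S ∧
      (∀ z : ℂ, S z = 0 ↔ ∃ n : ℕ, z = (t n : ℂ)) ∧
      (∀ n : ℕ, deriv S (t n) ≠ 0) ∧
      (∀ z : ℂ, (starRingEnd ℂ) (S ((starRingEnd ℂ) z)) = S z) ∧
      Summable (fun n => 1 / (‖deriv S (t n)‖ ^ 2 * μ n)) := by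
  have ht_abs : Tendsto (fun n => |t n|) atTop atTop := tendsto_atTop_of_finite_setOf_le hdisc
  have ha : Tendsto (fun n => ‖(t n : ℂ)‖) atTop atTop := by simpa using ht_abs
  set F := canonicalProduct fun n => (t n : ℂ)
  have hF' : ∀ n, deriv F (t n) ≠ 0 :=
    deriv_canonicalProduct_ne_zero ha (ofReal_injective.comp ht)
  have hA : ∀ n, 0 < ‖deriv F (t n)‖ ^ 2 * μ n := fun n =>
    mul_pos (pow_pos (norm_pos_iff.mpr (hF' n)) 2) (hμ n)
  obtain ⟨φ, hφ, hφ_conj, hφ_re⟩ := exists_differentiable_conj_invariant_le_re ht_abs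
    fun n => 2 ^ n / (‖deriv F (t n)‖ ^ 2 * μ n)
  have hS' : ∀ n, HasDerivAt (fun z => F z * exp (φ z)) (deriv F (t n) * exp (φ (t n))) (t n) :=
    fun n => (differentiable_canonicalProduct ha _).hasDerivAt.mul_of_eq_zero
      ((canonicalProduct_eq_zero_iff ha).mpr ⟨n, rfl⟩) (hφ _).cexp
  refine ⟨fun z => F z * exp (φ z), (differentiable_canonicalProduct ha).mul hφ.cexp,
    fun z => ?_, fun n => ?_, fun z => ?_, ?_⟩
  · simp [F, canonicalProduct_eq_zero_iff ha, exp_ne_zero]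
  · rw [(hS' n).deriv]
    exact mul_ne_zero (hF' n) (exp_ne_zero _)
  · rw [map_mul, ← exp_conj, hφ_conj, conj_canonicalProduct ha fun n => conj_ofReal _]
  · refine (summable_one_div_exp_sq_mul hA hφ_re).congr fun n => ?_
    rw [(hS' n).deriv, norm_mul, norm_exp]
    ring
end

section
/- For every v ∈ ℓ²(μ), the series ∑ₙ vₙ · S(z)/((z − tₙ) · S'(tₙ)) converges uniformly on every compact subset of ℂ (where at z = tₙ the summand is interpreted by its removable-singularity value vₙ · S'(tₙ)/S'(tₙ)), and its sum X_v is an entire function of z. -/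
noncomputable section

/-- The `n`-th summand `vₙ · S(z)/((z − tₙ)·S'(tₙ))` of the series defining `X_v`,
with the removable singularity at `z = tₙ` filled in by its limit value
`vₙ · S'(tₙ)/S'(tₙ) = vₙ`. -/
def Xterm (S : ℂ → ℂ) (t : ℕ → ℝ) (v : ℕ → ℂ) (n : ℕ) (z : ℂ) : ℂ :=
  if z = (t n : ℂ) then v n else v n * S z / ((z - (t n : ℂ)) * deriv S (t n))

/-- The function `X_v(z) = ∑ₙ vₙ · S(z)/((z − tₙ)·S'(tₙ))` (with removable
singularities at the points `tₙ`). -/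
def Xfun (S : ℂ → ℂ) (t : ℕ → ℝ) (v : ℕ → ℂ) (z : ℂ) : ℂ :=
  ∑' n : ℕ, Xterm S t v n z

/-- **Statement.** For every `v ∈ ℓ²(μ)`, the series `∑ₙ vₙ·S(z)/((z − tₙ)·S'(tₙ))`
converges uniformly on every compact subset of `ℂ`, and its sum `X_v` is an
entire function. -/
theorem Xfun_tendstoUniformlyOn_and_entire
    (μ : ℕ → ℝ) (hμ : ∀ n, 0 < μ n)
    (t : ℕ → ℝ) (ht : Function.Injective t)
    (hdisc : ∀ R : ℝ, {n : ℕ | |t n| ≤ R}.Finite)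
    (S : ℂ → ℂ) (hS : Differentiable ℂ S)
    (hSzero : ∀ z : ℂ, S z = 0 ↔ ∃ n : ℕ, z = (t n : ℂ))
    (hSsimple : ∀ n : ℕ, deriv S (t n) ≠ 0)
    (hSsym : ∀ z : ℂ, (starRingEnd ℂ) (S ((starRingEnd ℂ) z)) = S z)
    (hSsum : Summable (fun n => 1 / (‖deriv S (t n)‖ ^ 2 * μ n)))
    (v : ℕ → ℂ) (hv : Summable fun n => μ n * ‖v n‖ ^ 2) :
    (∀ K : Set ℂ, IsCompact K →
      TendstoUniformlyOn (fun (N : Finset ℕ) (z : ℂ) => ∑ n ∈ N, Xterm S t v n z)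
        (Xfun S t v) Filter.atTop K) ∧
    Differentiable ℂ (Xfun S t v) := by
  classical
  -- Summability of the weights w n = ‖v n‖ / ‖S'(tₙ)‖ via Cauchy–Schwarz / AM-GM
  have hw : Summable (fun n => ‖v n‖ / ‖deriv S (t n)‖) := by
    refine Summable.of_nonneg_of_le (fun n => by positivity) (fun n => ?_)
      (((hv.add hSsum)).mul_left (1/2))
    have hm : 0 < μ n := hμ n
    have hD : (0:ℝ) < ‖deriv S (t n)‖ := norm_pos_iff.mpr (hSsimple n)
    have hA : (0:ℝ) ≤ ‖v n‖ := norm_nonneg _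
    have h1 : (0:ℝ) ≤ (μ n * ‖v n‖ * ‖deriv S (t n)‖ - 1)^2 := sq_nonneg _
    rw [div_le_iff₀ hD]
    have h2 : 1 / (‖deriv S (t n)‖ ^ 2 * μ n) * (‖deriv S (t n)‖ ^ 2 * μ n) = 1 := by
      rw [one_div, inv_mul_cancel₀ (by positivity)]
    nlinarith [mul_pos hm hD, mul_pos (mul_pos hm hD) hD, sq_nonneg (‖v n‖ * ‖deriv S (t n)‖)]
  -- each term is entire
  have hterm_diff : ∀ n, Differentiable ℂ (Xterm S t v n) := by
    intro n
    have hS0 : S ((t n : ℂ)) = 0 := (hSzero _).mpr ⟨n, rfl⟩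
    have heq : Xterm S t v n = fun z => (v n / deriv S (t n)) * dslope S ((t n : ℂ)) z := by
      funext z
      by_cases h : z = (t n : ℂ)
      · subst h
        simp only [Xterm, eq_self_iff_true, if_true, dslope_same]
        rw [div_mul_cancel₀ _ (hSsimple n)]
      · simp only [Xterm, if_neg h, dslope_of_ne _ h, slope_def_field, hS0, sub_zero]
        have hz : z - (t n : ℂ) ≠ 0 := sub_ne_zero.mpr h
        field_simp
    rw [heq]
    refine Differentiable.const_mul ?_ _
    intro z
    by_cases h : z = (t n : ℂ)
    · subst h
      obtain ⟨p, hp⟩ := hS.analyticAt ((t n : ℂ))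
      exact hp.has_fpower_series_dslope_fslope.analyticAt.differentiableAt
    · exact (differentiableAt_dslope_of_ne h).mpr (hS z)
  have huniform : ∀ K : Set ℂ, IsCompact K →
      TendstoUniformlyOn (fun (N : Finset ℕ) (z : ℂ) => ∑ n ∈ N, Xterm S t v n z)
        (Xfun S t v) Filter.atTop K := by
    intro K hK
    obtain ⟨R, hR⟩ := hK.isBounded.subset_closedBall 0
    obtain ⟨C, hC⟩ := hK.exists_bound_of_continuousOn hS.continuous.continuousOn
    have hucalc : Summable (fun n => C * (‖v n‖ / ‖deriv S (t n)‖)) := hw.mul_left C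
    have hcof : ∀ᶠ n in Filter.cofinite, ∀ x ∈ K,
        ‖Xterm S t v n x‖ ≤ C * (‖v n‖ / ‖deriv S (t n)‖) := by
      have hfin : {n : ℕ | |t n| ≤ R + 1}.Finite := hdisc (R + 1)
      filter_upwards [hfin.compl_mem_cofinite] with n hn x hx
      simp only [Set.mem_compl_iff, Set.mem_setOf_eq, not_le] at hn
      have hxR : ‖x‖ ≤ R := by simpa using hR hx
      have htn : ‖((t n : ℝ) : ℂ)‖ = |t n| := by
        simp [Complex.norm_real]
      have hone : (1:ℝ) ≤ ‖x - (t n : ℂ)‖ := by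
        have := norm_sub_norm_le ((t n : ℂ)) x
        rw [htn] at this
        have h2 : ‖(t n : ℂ) - x‖ = ‖x - (t n : ℂ)‖ := norm_sub_rev _ _
        linarith
      have hxne : x ≠ (t n : ℂ) := by
        intro h; rw [h, htn] at hxR; linarith
      have hD : (0:ℝ) < ‖deriv S (t n)‖ := norm_pos_iff.mpr (hSsimple n)
      have hCx : ‖S x‖ ≤ C := hC x hx
      rw [Xterm, if_neg hxne]
      rw [norm_div, norm_mul, norm_mul]
      calc ‖v n‖ * ‖S x‖ / (‖x - (t n : ℂ)‖ * ‖deriv S (t n)‖)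
          ≤ ‖v n‖ * C / (1 * ‖deriv S (t n)‖) := by
            have hvD : (0:ℝ) ≤ ‖v n‖ * C := le_trans (by positivity) (mul_le_mul_of_nonneg_left hCx (norm_nonneg _))
            apply div_le_div₀ hvD
              (mul_le_mul_of_nonneg_left hCx (norm_nonneg _)) (by positivity)
              (mul_le_mul_of_nonneg_right hone hD.le)
        _ = C * (‖v n‖ / ‖deriv S (t n)‖) := by field_simp
    exact tendstoUniformlyOn_tsum_of_cofinite_eventually hucalc hcof
  refine ⟨huniform, ?_⟩
  have hloc : TendstoLocallyUniformlyOn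
      (fun (N : Finset ℕ) (z : ℂ) => ∑ n ∈ N, Xterm S t v n z)
      (Xfun S t v) Filter.atTop Set.univ := by
    rw [tendstoLocallyUniformlyOn_iff_forall_isCompact isOpen_univ]
    intro K _ hK
    exact huniform K hK
  have hdiff : DifferentiableOn ℂ (Xfun S t v) Set.univ := by
    refine hloc.differentiableOn (Filter.Eventually.of_forall fun N => ?_) isOpen_univ
    exact (Differentiable.fun_sum (fun n _ => hterm_diff n)).differentiableOn
  exact differentiableOn_univ.mp hdiff
end
end

section
/- For every z ∈ ℂ, the point-evaluation functional v ↦ X_v(z) is a bounded linear functional on ℓ²(μ). Explicitly: for every m ∈ ℕ one has |X_v(tₘ)| ≤ μₘ^{-1/2} · ‖v‖_{ℓ²(μ)}, and for z ∉ {tₙ : n ∈ ℕ} one has |X_v(z)| ≤ ‖v‖_{ℓ²(μ)} · |S(z)| · supₙ |z − tₙ|^{-1} · (∑ₙ 1/(|S'(tₙ)|² μₙ))^{1/2}. -/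
noncomputable section

lemma cs_summable (a b : ℕ → ℝ) (ha : ∀ n, 0 ≤ a n) (hb : ∀ n, 0 ≤ b n)
    (hsa : Summable fun n => a n ^ 2) (hsb : Summable fun n => b n ^ 2) :
    Summable fun n => a n * b n := by
  refine Summable.of_nonneg_of_le (fun n => mul_nonneg (ha n) (hb n))
    (fun n => ?_) ((hsa.add hsb).div_const 2)
  nlinarith [sq_nonneg (a n - b n)]

lemma cs_tsum (a b : ℕ → ℝ) (ha : ∀ n, 0 ≤ a n) (hb : ∀ n, 0 ≤ b n)
    (hsa : Summable fun n => a n ^ 2) (hsb : Summable fun n => b n ^ 2) :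
    ∑' n, a n * b n ≤ Real.sqrt (∑' n, a n ^ 2) * Real.sqrt (∑' n, b n ^ 2) := by
  refine Summable.tsum_le_of_sum_le (cs_summable a b ha hb hsa hsb) (fun s => ?_)
  have h1 : (∑ i ∈ s, a i * b i) ^ 2 ≤ (∑ i ∈ s, a i ^ 2) * ∑ i ∈ s, b i ^ 2 :=
    Finset.sum_mul_sq_le_sq_mul_sq s a b
  have h2 : (0:ℝ) ≤ ∑ i ∈ s, a i * b i :=
    Finset.sum_nonneg fun i _ => mul_nonneg (ha i) (hb i)
  calc ∑ i ∈ s, a i * b i = Real.sqrt ((∑ i ∈ s, a i * b i) ^ 2) := (Real.sqrt_sq h2).symm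
    _ ≤ Real.sqrt ((∑ i ∈ s, a i ^ 2) * ∑ i ∈ s, b i ^ 2) := Real.sqrt_le_sqrt h1
    _ = Real.sqrt (∑ i ∈ s, a i ^ 2) * Real.sqrt (∑ i ∈ s, b i ^ 2) :=
        Real.sqrt_mul (Finset.sum_nonneg fun i _ => sq_nonneg _) _
    _ ≤ _ := by
        gcongr
        · exact Summable.sum_le_tsum s (fun i _ => sq_nonneg _) hsa
        · exact Summable.sum_le_tsum s (fun i _ => sq_nonneg _) hsb

/-- **Statement.** For every `z ∈ ℂ`, the point-evaluation functional `v ↦ X_v(z)`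
is bounded on `ℓ²(μ)`. Explicitly: `|X_v(tₘ)| ≤ μₘ^{-1/2}·‖v‖_{ℓ²(μ)}` for every
`m`, and for `z ∉ {tₙ}`,
`|X_v(z)| ≤ ‖v‖_{ℓ²(μ)} · |S(z)| · supₙ |z − tₙ|⁻¹ · (∑ₙ 1/(|S'(tₙ)|² μₙ))^{1/2}`. -/
theorem Xfun_point_evaluation_bounded
    (μ : ℕ → ℝ) (hμ : ∀ n, 0 < μ n)
    (t : ℕ → ℝ) (ht : Function.Injective t)
    (hdisc : ∀ R : ℝ, {n : ℕ | |t n| ≤ R}.Finite)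
    (S : ℂ → ℂ) (hS : Differentiable ℂ S)
    (hSzero : ∀ z : ℂ, S z = 0 ↔ ∃ n : ℕ, z = (t n : ℂ))
    (hSsimple : ∀ n : ℕ, deriv S (t n) ≠ 0)
    (hSsym : ∀ z : ℂ, (starRingEnd ℂ) (S ((starRingEnd ℂ) z)) = S z)
    (hSsum : Summable (fun n => 1 / (‖deriv S (t n)‖ ^ 2 * μ n))) :
    (∀ z : ℂ, ∃ C : ℝ, ∀ v : ℕ → ℂ, (Summable fun n => μ n * ‖v n‖ ^ 2) →
      ‖Xfun S t v z‖ ≤ C * Real.sqrt (∑' n : ℕ, μ n * ‖v n‖ ^ 2)) ∧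
    (∀ m : ℕ, ∀ v : ℕ → ℂ, (Summable fun n => μ n * ‖v n‖ ^ 2) →
      ‖Xfun S t v (t m)‖ ≤ (μ m) ^ (-(1 : ℝ) / 2) * Real.sqrt (∑' n : ℕ, μ n * ‖v n‖ ^ 2)) ∧
    (∀ z : ℂ, (∀ n : ℕ, z ≠ (t n : ℂ)) →
      ∀ v : ℕ → ℂ, (Summable fun n => μ n * ‖v n‖ ^ 2) →
        ‖Xfun S t v z‖ ≤
          Real.sqrt (∑' n : ℕ, μ n * ‖v n‖ ^ 2) * ‖S z‖ * (⨆ n : ℕ, ‖z - (t n : ℂ)‖⁻¹) *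
            Real.sqrt (∑' n : ℕ, 1 / (‖deriv S (t n)‖ ^ 2 * μ n))) := by
  have part2 : ∀ m : ℕ, ∀ v : ℕ → ℂ, (Summable fun n => μ n * ‖v n‖ ^ 2) →
      ‖Xfun S t v (t m)‖ ≤ (μ m) ^ (-(1 : ℝ) / 2) * Real.sqrt (∑' n : ℕ, μ n * ‖v n‖ ^ 2) := by
    intro m v hv
    have hX : Xfun S t v (t m) = v m := by
      unfold Xfun
      have hterm : ∀ n, Xterm S t v n (t m) = if n = m then v m else 0 := by
        intro n
        unfold Xterm
        by_cases h : n = m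
        · subst h; simp
        · rw [if_neg h, if_neg, (hSzero _).2 ⟨m, rfl⟩]
          · ring
          · intro hc
            exact h (ht (by exact_mod_cast hc)).symm
      rw [tsum_congr hterm, tsum_ite_eq]
    rw [hX]
    have hm : μ m * ‖v m‖ ^ 2 ≤ ∑' n, μ n * ‖v n‖ ^ 2 :=
      Summable.le_tsum hv m (fun i _ => mul_nonneg (hμ i).le (sq_nonneg _))
    have h1 : (μ m) ^ (-(1 : ℝ) / 2) = (Real.sqrt (μ m))⁻¹ := by
      rw [neg_div, Real.rpow_neg (hμ m).le, Real.sqrt_eq_rpow]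
    have hms : 0 < Real.sqrt (μ m) := Real.sqrt_pos.2 (hμ m)
    have h2 : Real.sqrt (μ m) * ‖v m‖ ≤ Real.sqrt (∑' n, μ n * ‖v n‖ ^ 2) := by
      have := Real.sqrt_le_sqrt hm
      rwa [Real.sqrt_mul (hμ m).le, Real.sqrt_sq (norm_nonneg _)] at this
    rw [h1, inv_mul_eq_div, le_div_iff₀ hms]
    linarith [h2]
  have part3 : ∀ z : ℂ, (∀ n : ℕ, z ≠ (t n : ℂ)) →
      ∀ v : ℕ → ℂ, (Summable fun n => μ n * ‖v n‖ ^ 2) →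
        ‖Xfun S t v z‖ ≤
          Real.sqrt (∑' n : ℕ, μ n * ‖v n‖ ^ 2) * ‖S z‖ * (⨆ n : ℕ, ‖z - (t n : ℂ)‖⁻¹) *
            Real.sqrt (∑' n : ℕ, 1 / (‖deriv S (t n)‖ ^ 2 * μ n)) := by
    intro z hz v hv
    set a : ℕ → ℝ := fun n => Real.sqrt (μ n) * ‖v n‖ with ha_def
    set b : ℕ → ℝ := fun n => (Real.sqrt (μ n) * ‖deriv S (t n)‖)⁻¹ with hb_def
    have ha : ∀ n, 0 ≤ a n := fun n => mul_nonneg (Real.sqrt_nonneg _) (norm_nonneg _)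
    have hb : ∀ n, 0 ≤ b n := fun n =>
      inv_nonneg.2 (mul_nonneg (Real.sqrt_nonneg _) (norm_nonneg _))
    have ha2 : (fun n => a n ^ 2) = fun n => μ n * ‖v n‖ ^ 2 := by
      funext n
      simp only [ha_def, mul_pow, Real.sq_sqrt (hμ n).le]
    have hb2 : (fun n => b n ^ 2) = fun n => 1 / (‖deriv S (t n)‖ ^ 2 * μ n) := by
      funext n
      simp only [hb_def]
      rw [inv_pow, mul_pow, Real.sq_sqrt (hμ n).le, one_div, mul_comm]
    -- boundedness of the sup
    have hF := hdisc (‖z‖ + 1)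
    set B0 : ℝ := 1 + ∑ n ∈ hF.toFinset, ‖z - (t n : ℂ)‖⁻¹ with hB0
    have hsum_nonneg : (0:ℝ) ≤ ∑ n ∈ hF.toFinset, ‖z - (t n : ℂ)‖⁻¹ :=
      Finset.sum_nonneg fun i _ => inv_nonneg.2 (norm_nonneg _)
    have hbd : ∀ n, ‖z - (t n : ℂ)‖⁻¹ ≤ B0 := by
      intro n
      by_cases hn : |t n| ≤ ‖z‖ + 1
      · have hmem : n ∈ hF.toFinset := hF.mem_toFinset.2 hn
        have := Finset.single_le_sum
          (f := fun i => ‖z - (t i : ℂ)‖⁻¹)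
          (fun i _ => inv_nonneg.2 (norm_nonneg _)) hmem
        linarith
      · have h1 : (1:ℝ) ≤ ‖z - (t n : ℂ)‖ := by
          have h2 : ‖(t n : ℂ)‖ - ‖z‖ ≤ ‖z - (t n : ℂ)‖ := by
            have := norm_sub_norm_le ((t n : ℂ)) z
            rwa [norm_sub_rev] at this
          have h3 : ‖(t n : ℂ)‖ = |t n| := by
            rw [Complex.norm_real, Real.norm_eq_abs]
          push_neg at hn
          rw [h3] at h2
          linarith
        have := inv_le_one_of_one_le₀ h1
        linarith
    have hBdd : BddAbove (Set.range fun n => ‖z - (t n : ℂ)‖⁻¹) := by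
      refine ⟨B0, ?_⟩
      rintro x ⟨n, rfl⟩
      exact hbd n
    set M : ℝ := ⨆ n : ℕ, ‖z - (t n : ℂ)‖⁻¹ with hM
    have hMle : ∀ n, ‖z - (t n : ℂ)‖⁻¹ ≤ M := fun n => le_ciSup hBdd n
    have hM0 : 0 ≤ M := le_trans (inv_nonneg.2 (norm_nonneg _)) (hMle 0)
    have hab : ∀ n, a n * b n = ‖v n‖ * ‖deriv S (t n)‖⁻¹ := by
      intro n
      have hs : Real.sqrt (μ n) ≠ 0 := ne_of_gt (Real.sqrt_pos.2 (hμ n))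
      simp only [ha_def, hb_def, mul_inv]
      rw [mul_comm (Real.sqrt (μ n)), mul_assoc, ← mul_assoc (Real.sqrt (μ n)),
        mul_inv_cancel₀ hs, one_mul]
    have hterm : ∀ n, ‖Xterm S t v n z‖ ≤ a n * b n * (‖S z‖ * M) := by
      intro n
      rw [Xterm, if_neg (hz n)]
      rw [norm_div, norm_mul, norm_mul]
      calc ‖v n‖ * ‖S z‖ / (‖z - (t n : ℂ)‖ * ‖deriv S (t n)‖)
          = ‖v n‖ * ‖deriv S (t n)‖⁻¹ * ‖S z‖ * ‖z - (t n : ℂ)‖⁻¹ := by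
            rw [div_eq_mul_inv, mul_inv]; ring
        _ ≤ ‖v n‖ * ‖deriv S (t n)‖⁻¹ * ‖S z‖ * M := by
            have h0 : (0:ℝ) ≤ ‖v n‖ * ‖deriv S (t n)‖⁻¹ * ‖S z‖ := by positivity
            exact mul_le_mul_of_nonneg_left (hMle n) h0
        _ = a n * b n * (‖S z‖ * M) := by rw [hab n]; ring
    have hsa : Summable (fun n => a n ^ 2) := by rw [ha2]; exact hv
    have hsb : Summable (fun n => b n ^ 2) := by rw [hb2]; exact hSsum
    have hsab := cs_summable a b ha hb hsa hsb
    have hsX : Summable (fun n => ‖Xterm S t v n z‖) :=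
      Summable.of_nonneg_of_le (fun n => norm_nonneg _) hterm (hsab.mul_right _)
    calc ‖Xfun S t v z‖ ≤ ∑' n, ‖Xterm S t v n z‖ := norm_tsum_le_tsum_norm hsX
      _ ≤ ∑' n, a n * b n * (‖S z‖ * M) := Summable.tsum_le_tsum hterm hsX (hsab.mul_right _)
      _ = (∑' n, a n * b n) * (‖S z‖ * M) := tsum_mul_right
      _ ≤ Real.sqrt (∑' n, a n ^ 2) * Real.sqrt (∑' n, b n ^ 2) * (‖S z‖ * M) :=
          mul_le_mul_of_nonneg_right (cs_tsum a b ha hb hsa hsb) (by positivity)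
      _ = Real.sqrt (∑' n : ℕ, μ n * ‖v n‖ ^ 2) * ‖S z‖ * M *
            Real.sqrt (∑' n : ℕ, 1 / (‖deriv S (t n)‖ ^ 2 * μ n)) := by
          rw [ha2, hb2]; ring
  refine ⟨?_, part2, part3⟩
  intro z
  by_cases h : ∃ n : ℕ, z = (t n : ℂ)
  · obtain ⟨m, rfl⟩ := h
    exact ⟨(μ m) ^ (-(1 : ℝ) / 2), part2 m⟩
  · push_neg at h
    refine ⟨‖S z‖ * (⨆ n : ℕ, ‖z - (t n : ℂ)‖⁻¹) *
      Real.sqrt (∑' n : ℕ, 1 / (‖deriv S (t n)‖ ^ 2 * μ n)), fun v hv => ?_⟩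
    calc ‖Xfun S t v z‖ ≤ _ := part3 z h v hv
      _ = _ := by ring
end
end

section
/- Let w ∈ ℂ with S(w) ≠ 0 (in particular, any w ∉ ℝ), and for v ∈ ℓ²(μ) define D_w(v) = (vₙ/(tₙ − w))ₙ. Then D_w(v) ∈ ℓ²(μ), and for every z ∈ ℂ with z ≠ w the identity X_{D_w(v)}(z) = (X_v(z) − S(z)·X_v(w)/S(w)) / (z − w) holds. -/
noncomputable section

lemma sep_lemma (t : ℕ → ℝ) (hdisc : ∀ R : ℝ, {n : ℕ | |t n| ≤ R}.Finite) (z : ℂ) :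
    ∃ c : ℝ, 0 < c ∧ c ≤ 1 ∧ ∀ n, z ≠ (t n : ℂ) → c ≤ ‖z - (t n : ℂ)‖ := by
  classical
  set F := (hdisc (‖z‖ + 1)).toFinset with hF
  set G := F.filter (fun n => z ≠ (t n : ℂ)) with hG
  set A : Finset ℝ := insert (1:ℝ) (G.image fun n => ‖z - (t n:ℂ)‖) with hA
  have hAne : A.Nonempty := ⟨1, Finset.mem_insert_self _ _⟩
  refine ⟨A.min' hAne, ?_, ?_, ?_⟩
  · have : ∀ x ∈ A, 0 < x := by
      intro x hx
      rcases Finset.mem_insert.mp hx with h | h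
      · simp [h]
      · obtain ⟨n, hn, rfl⟩ := Finset.mem_image.mp h
        have : z ≠ (t n : ℂ) := (Finset.mem_filter.mp hn).2
        simpa [sub_eq_zero] using this
    exact this _ (A.min'_mem hAne)
  · exact Finset.min'_le _ _ (Finset.mem_insert_self _ _)
  · intro n hn
    by_cases hnF : n ∈ F
    · exact Finset.min'_le _ _ (Finset.mem_insert_of_mem
        (Finset.mem_image_of_mem _ (Finset.mem_filter.mpr ⟨hnF, hn⟩)))
    · have h1 : ¬ (|t n| ≤ ‖z‖ + 1) := by
        intro h
        exact hnF (by simp [hF, Set.Finite.mem_toFinset]; exact h)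
      push_neg at h1
      have h2 : ‖z - (t n : ℂ)‖ ≥ ‖(t n : ℂ)‖ - ‖z‖ := by
        have := norm_sub_norm_le ((t n : ℂ)) z
        rw [norm_sub_rev]
        linarith [abs_norm (z - (t n:ℂ))]
      have h3 : ‖(t n : ℂ)‖ = |t n| := by
        simp [Complex.norm_real]
      have hc1 : A.min' hAne ≤ 1 := Finset.min'_le _ _ (Finset.mem_insert_self _ _)
      nlinarith

lemma cs_summable_s8 (μ : ℕ → ℝ) (hμ : ∀ n, 0 < μ n) (S' : ℕ → ℂ) (hS' : ∀ n, S' n ≠ 0)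
    (hSsum : Summable (fun n => 1/(‖S' n‖^2 * μ n))) (v : ℕ → ℂ)
    (hv : Summable fun n => μ n * ‖v n‖^2) :
    Summable fun n => ‖v n‖ / ‖S' n‖ := by
  have key : ∀ n, ‖v n‖ / ‖S' n‖ ≤ (μ n * ‖v n‖^2 + 1/(‖S' n‖^2 * μ n))/2 := by
    intro n
    have hb : 0 < ‖S' n‖ := norm_pos_iff.mpr (hS' n)
    have hm := hμ n
    have ha : 0 ≤ ‖v n‖ := norm_nonneg _
    have hinv : (1/(‖S' n‖^2 * μ n)) * (‖S' n‖^2 * μ n) = 1 := by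
      rw [one_div, inv_mul_cancel₀ (by positivity)]
    rw [div_le_iff₀ hb]
    nlinarith [sq_nonneg (‖S' n‖ * μ n * ‖v n‖ - 1), mul_pos hb hm,
      mul_pos (mul_pos hb hb) hm, sq_nonneg (‖v n‖), hinv,
      mul_nonneg (mul_nonneg hb.le hm.le) ha]
  exact Summable.of_nonneg_of_le (fun n => by positivity) key ((hv.add hSsum).div_const 2)

lemma Xterm_summable (μ : ℕ → ℝ) (hμ : ∀ n, 0 < μ n)
    (t : ℕ → ℝ) (ht : Function.Injective t)
    (hdisc : ∀ R : ℝ, {n : ℕ | |t n| ≤ R}.Finite)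
    (S : ℂ → ℂ) (hSsimple : ∀ n : ℕ, deriv S (t n) ≠ 0)
    (hSsum : Summable (fun n => 1 / (‖deriv S (t n)‖ ^ 2 * μ n)))
    (v : ℕ → ℂ) (hv : Summable fun n => μ n * ‖v n‖ ^ 2) (z : ℂ) :
    Summable fun n => Xterm S t v n z := by
  obtain ⟨c, hc, hc1, hsep⟩ := sep_lemma t hdisc z
  have hB : Summable fun n => ‖v n‖ / ‖deriv S (t n)‖ :=
    cs_summable_s8 μ hμ _ hSsimple hSsum v hv
  have hB2 : Summable fun n => (‖S z‖/c) * (‖v n‖ / ‖deriv S (t n)‖) := hB.mul_left _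
  have bound : ∀ n, z ≠ (t n:ℂ) →
      ‖Xterm S t v n z‖ ≤ (‖S z‖/c) * (‖v n‖ / ‖deriv S (t n)‖) := by
    intro n hzn
    have hd : 0 < ‖deriv S (t n)‖ := norm_pos_iff.mpr (hSsimple n)
    have hzc : c ≤ ‖z - (t n:ℂ)‖ := hsep n hzn
    rw [Xterm, if_neg hzn, norm_div, norm_mul, norm_mul]
    have heq : (‖S z‖/c) * (‖v n‖/‖deriv S (t n)‖)
        = ‖v n‖*‖S z‖/(c*‖deriv S (t n)‖) := by ring
    rw [heq]
    gcongr
  by_cases hex : ∃ m, z = (t m : ℂ)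
  · obtain ⟨m, hm⟩ := hex
    apply Summable.of_norm
    have hupd : Summable (Function.update
        (fun n => (‖S z‖/c) * (‖v n‖ / ‖deriv S (t n)‖)) m ‖v m‖) := hB2.update m _
    apply Summable.of_nonneg_of_le (fun n => norm_nonneg _) _ hupd
    intro n
    by_cases hnm : n = m
    · subst hnm
      rw [Function.update_self, Xterm, if_pos hm]
    · rw [Function.update_of_ne hnm]
      apply bound
      intro h
      exact hnm (ht (Complex.ofReal_inj.mp (h.symm.trans hm)))
  · push_neg at hex
    exact Summable.of_norm (Summable.of_nonneg_of_le (fun n => norm_nonneg _)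
      (fun n => bound n (hex n)) hB2)

lemma term_id (S : ℂ → ℂ) (t : ℕ → ℝ) (hSsimple : ∀ n : ℕ, deriv S (t n) ≠ 0)
    (v : ℕ → ℂ) (w z : ℂ) (hwn : ∀ n, w ≠ (t n:ℂ)) (hSw : S w ≠ 0)
    (hSt : ∀ n, S ((t n : ℂ)) = 0) (hzw : z ≠ w) (n : ℕ) :
    Xterm S t (fun k => v k / ((t k:ℂ) - w)) n z
      = Xterm S t v n z / (z - w) - (S z / S w / (z - w)) * Xterm S t v n w := by
  unfold Xterm
  rw [if_neg (hwn n)]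
  by_cases hz : z = (t n:ℂ)
  · rw [if_pos hz, if_pos hz]
    subst hz
    simp [hSt n]
  · rw [if_neg hz, if_neg hz]
    have h1 : z - (t n:ℂ) ≠ 0 := sub_ne_zero.mpr hz
    have h2 : w - (t n:ℂ) ≠ 0 := sub_ne_zero.mpr (hwn n)
    have h3 : (t n:ℂ) - w ≠ 0 := fun h => (hwn n) (sub_eq_zero.mp h).symm
    have h4 : z - w ≠ 0 := sub_ne_zero.mpr hzw
    have h5 := hSsimple n
    field_simp
    ring

/-- **Statement.** Let `w ∈ ℂ` with `S(w) ≠ 0`, and for `v ∈ ℓ²(μ)` let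
`D_w(v) = (vₙ/(tₙ − w))ₙ`. Then `D_w(v) ∈ ℓ²(μ)` and for every `z ≠ w`,
`X_{D_w(v)}(z) = (X_v(z) − S(z)·X_v(w)/S(w))/(z − w)`. -/
theorem Xfun_divided_difference
    (μ : ℕ → ℝ) (hμ : ∀ n, 0 < μ n)
    (t : ℕ → ℝ) (ht : Function.Injective t)
    (hdisc : ∀ R : ℝ, {n : ℕ | |t n| ≤ R}.Finite)
    (S : ℂ → ℂ) (hS : Differentiable ℂ S)
    (hSzero : ∀ z : ℂ, S z = 0 ↔ ∃ n : ℕ, z = (t n : ℂ))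
    (hSsimple : ∀ n : ℕ, deriv S (t n) ≠ 0)
    (hSsym : ∀ z : ℂ, (starRingEnd ℂ) (S ((starRingEnd ℂ) z)) = S z)
    (hSsum : Summable (fun n => 1 / (‖deriv S (t n)‖ ^ 2 * μ n)))
    (v : ℕ → ℂ) (hv : Summable fun n => μ n * ‖v n‖ ^ 2)
    (w : ℂ) (hw : S w ≠ 0) :
    (Summable fun n => μ n * ‖v n / ((t n : ℂ) - w)‖ ^ 2) ∧
    (∀ z : ℂ, z ≠ w →
      Xfun S t (fun n => v n / ((t n : ℂ) - w)) z =
        (Xfun S t v z - S z * Xfun S t v w / S w) / (z - w)) := by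
  have hwn : ∀ n, w ≠ (t n : ℂ) := fun n h => hw (by rw [h]; exact (hSzero _).mpr ⟨n, rfl⟩)
  have hSt : ∀ n, S ((t n : ℂ)) = 0 := fun n => (hSzero _).mpr ⟨n, rfl⟩
  obtain ⟨c, hc, hc1, hsep⟩ := sep_lemma t hdisc w
  constructor
  · have hle : ∀ n, μ n * ‖v n / ((t n:ℂ) - w)‖^2 ≤ μ n * ‖v n‖^2 / c^2 := by
      intro n
      have hcn : c ≤ ‖(t n:ℂ) - w‖ := by
        rw [norm_sub_rev]; exact hsep n (hwn n)
      calc μ n * ‖v n / ((t n:ℂ) - w)‖^2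
          = μ n * ‖v n‖^2 / ‖(t n:ℂ) - w‖^2 := by rw [norm_div, div_pow]; ring
        _ ≤ μ n * ‖v n‖^2 / c^2 := by
            gcongr
            exact mul_nonneg (hμ n).le (by positivity)
    exact Summable.of_nonneg_of_le (fun n => mul_nonneg (hμ n).le (by positivity)) hle
      (hv.div_const _)
  · intro z hz
    have ha := Xterm_summable μ hμ t ht hdisc S hSsimple hSsum v hv z
    have hb := Xterm_summable μ hμ t ht hdisc S hSsimple hSsum v hv w
    unfold Xfun
    calc (∑' n, Xterm S t (fun k => v k / ((t k:ℂ) - w)) n z)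
        = ∑' n, (Xterm S t v n z / (z - w) - (S z / S w / (z - w)) * Xterm S t v n w) :=
          tsum_congr (term_id S t hSsimple v w z hwn hw hSt hz)
      _ = (∑' n, Xterm S t v n z / (z - w)) - ∑' n, (S z / S w / (z - w)) * Xterm S t v n w :=
          Summable.tsum_sub (ha.div_const _) (hb.mul_left _)
      _ = (∑' n, Xterm S t v n z) / (z - w) - (S z / S w / (z - w)) * ∑' n, Xterm S t v n w := by
          rw [tsum_div_const, tsum_mul_left]
      _ = ((∑' n, Xterm S t v n z) - S z * (∑' n, Xterm S t v n w) / S w) / (z - w) := by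
          ring
end
end

section
/- Suppose v ∈ ℓ²(μ), w ∈ ℂ \ ℝ, and X_v(w) = 0. Let u be the sequence uₙ = vₙ · (tₙ − conj w)/(tₙ − w). Then u ∈ ℓ²(μ) with ∑ₙ μₙ|uₙ|² = ∑ₙ μₙ|vₙ|², and X_u(z) = X_v(z)·(z − conj w)/(z − w) for all z ≠ w. That is, the family {X_v : v ∈ ℓ²(μ)}, equipped with the norm transported from ℓ²(μ), satisfies the de Branges axiom (H1): whenever a member vanishes at a non-real point w, dividing out the zero at w and inserting a zero at conj w yields another member of the same norm. -/
noncomputable section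

lemma Xfun_off (S : ℂ → ℂ) (t : ℕ → ℝ) (v : ℕ → ℂ) (x : ℂ) (hx : ∀ n, x ≠ (t n : ℂ)) :
    Xfun S t v x = S x * ∑' n, v n / ((x - (t n : ℂ)) * deriv S (t n)) := by
  unfold Xfun Xterm
  rw [← tsum_mul_left]
  exact tsum_congr fun n => by rw [if_neg (hx n)]; ring

lemma Xfun_at (S : ℂ → ℂ) (t : ℕ → ℝ) (ht : Function.Injective t)
    (hSzero : ∀ z : ℂ, S z = 0 ↔ ∃ n : ℕ, z = (t n : ℂ)) (v : ℕ → ℂ) (m : ℕ) :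
    Xfun S t v (t m) = v m := by
  unfold Xfun Xterm
  rw [tsum_eq_single m (fun n hnm => by
    have h1 : ((t m : ℂ)) ≠ (t n : ℂ) := by
      intro h
      exact hnm (ht (by exact_mod_cast h)).symm
    rw [if_neg h1, (hSzero _).2 ⟨m, rfl⟩, mul_zero, zero_div])]
  exact if_pos rfl

lemma key_summable (μ : ℕ → ℝ) (hμ : ∀ n, 0 < μ n) (t : ℕ → ℝ)
    (hdisc : ∀ R : ℝ, {n : ℕ | |t n| ≤ R}.Finite)
    (D : ℕ → ℂ) (hD : ∀ n, D n ≠ 0)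
    (hSsum : Summable (fun n => 1 / (‖D n‖ ^ 2 * μ n)))
    (v : ℕ → ℂ) (hv : Summable fun n => μ n * ‖v n‖ ^ 2)
    (x : ℂ) (hx : ∀ n, x ≠ (t n : ℂ)) :
    Summable (fun n => v n / ((x - (t n : ℂ)) * D n)) := by
  apply Summable.of_norm_bounded_eventually
    (g := fun n => (1/2) * (μ n * ‖v n‖ ^ 2 + 1 / (‖D n‖ ^ 2 * μ n)))
    ((hv.add hSsum).mul_left _)
  rw [Filter.eventually_cofinite]
  apply (hdisc (‖x‖ + 1)).subset
  intro n hn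
  simp only [Set.mem_setOf_eq] at hn ⊢
  by_contra hcon
  push_neg at hcon
  apply hn
  have h1 : (1:ℝ) ≤ ‖x - (t n : ℂ)‖ := by
    have h0 := norm_sub_norm_le ((t n : ℂ)) x
    have h2 : ‖((t n : ℝ) : ℂ)‖ = |t n| := by
      rw [Complex.norm_real, Real.norm_eq_abs]
    rw [h2, norm_sub_rev] at h0
    linarith
  rw [norm_div, norm_mul]
  have hμn := hμ n
  have hDn : 0 < ‖D n‖ := norm_pos_iff.mpr (hD n)
  have hvn : 0 ≤ ‖v n‖ := norm_nonneg _
  have hxtn : 0 < ‖x - (t n : ℂ)‖ := by linarith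
  rw [div_le_iff₀ (by positivity)]
  set a := ‖v n‖
  set B := ‖D n‖
  set m := μ n
  set X := ‖x - (t n : ℂ)‖
  have he : (1 / (B ^ 2 * m)) * (B ^ 2 * m) = 1 := by field_simp
  nlinarith [sq_nonneg (m * a * B - 1), mul_pos hDn hμn, sq_nonneg a,
    mul_nonneg (mul_nonneg hμn.le (sq_nonneg a)) (sub_nonneg.mpr h1),
    mul_nonneg (le_of_lt (by positivity : (0:ℝ) < 1 / (B ^ 2 * m))) (sub_nonneg.mpr h1),
    mul_le_mul_of_nonneg_left h1 (le_of_lt (by positivity : (0:ℝ) < 1/2 * (m * a ^ 2 + 1 / (B ^ 2 * m)) * B))]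

/-- **Statement (axiom (H1) for the family `{X_v}`).** Suppose `v ∈ ℓ²(μ)`,
`w ∈ ℂ \ ℝ`, and `X_v(w) = 0`. Let `uₙ = vₙ·(tₙ − conj w)/(tₙ − w)`. Then
`u ∈ ℓ²(μ)` with the same norm, and `X_u(z) = X_v(z)·(z − conj w)/(z − w)` for
all `z ≠ w`. -/
theorem Xfun_H1
    (μ : ℕ → ℝ) (hμ : ∀ n, 0 < μ n)
    (t : ℕ → ℝ) (ht : Function.Injective t)
    (hdisc : ∀ R : ℝ, {n : ℕ | |t n| ≤ R}.Finite)
    (S : ℂ → ℂ) (hS : Differentiable ℂ S)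
    (hSzero : ∀ z : ℂ, S z = 0 ↔ ∃ n : ℕ, z = (t n : ℂ))
    (hSsimple : ∀ n : ℕ, deriv S (t n) ≠ 0)
    (hSsym : ∀ z : ℂ, (starRingEnd ℂ) (S ((starRingEnd ℂ) z)) = S z)
    (hSsum : Summable (fun n => 1 / (‖deriv S (t n)‖ ^ 2 * μ n)))
    (v : ℕ → ℂ) (hv : Summable fun n => μ n * ‖v n‖ ^ 2)
    (w : ℂ) (hw : w.im ≠ 0) (hvw : Xfun S t v w = 0) :
    (Summable fun n => μ n * ‖v n * ((t n : ℂ) - (starRingEnd ℂ) w) / ((t n : ℂ) - w)‖ ^ 2) ∧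
    (∑' n : ℕ, μ n * ‖v n * ((t n : ℂ) - (starRingEnd ℂ) w) / ((t n : ℂ) - w)‖ ^ 2) =
      (∑' n : ℕ, μ n * ‖v n‖ ^ 2) ∧
    (∀ z : ℂ, z ≠ w →
      Xfun S t (fun n => v n * ((t n : ℂ) - (starRingEnd ℂ) w) / ((t n : ℂ) - w)) z =
        Xfun S t v z * (z - (starRingEnd ℂ) w) / (z - w)) := by
  set u : ℕ → ℂ := fun n => v n * ((t n : ℂ) - (starRingEnd ℂ) w) / ((t n : ℂ) - w) with hu
  have htw : ∀ n, ((t n : ℂ)) - w ≠ 0 := by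
    intro n h
    apply hw
    have := congrArg Complex.im h
    simpa using this.symm
  have hwt : ∀ n, w ≠ (t n : ℂ) := by
    intro n h
    exact htw n (by rw [h, sub_self])
  have hnorm : ∀ n, ‖u n‖ = ‖v n‖ := by
    intro n
    have hc : ((t n : ℂ)) - (starRingEnd ℂ) w = (starRingEnd ℂ) ((t n : ℂ) - w) := by
      simp [map_sub, Complex.conj_ofReal]
    rw [hu]
    simp only []
    rw [norm_div, norm_mul, hc, RCLike.norm_conj,
      mul_div_assoc, div_self (norm_ne_zero_iff.mpr (htw n)), mul_one]
  have heq : (fun n => μ n * ‖u n‖ ^ 2) = fun n => μ n * ‖v n‖ ^ 2 := by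
    funext n; rw [hnorm n]
  refine ⟨by rw [heq]; exact hv, by rw [heq], ?_⟩
  intro z hz
  have hSw : S w ≠ 0 := by
    intro h
    obtain ⟨n, hn⟩ := (hSzero w).1 h
    exact hwt n hn
  have hBsum := key_summable μ hμ t hdisc _ hSsimple hSsum v hv w hwt
  have hB : (∑' n, v n / ((w - (t n : ℂ)) * deriv S (t n))) = 0 := by
    have := Xfun_off S t v w hwt
    rw [hvw] at this
    rcases mul_eq_zero.mp this.symm with h | h
    · exact absurd h hSw
    · exact h
  by_cases hzt : ∃ m, z = (t m : ℂ)
  · obtain ⟨m, rfl⟩ := hzt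
    rw [Xfun_at S t ht hSzero u m, Xfun_at S t ht hSzero v m, hu]
  · push_neg at hzt
    have hAsum := key_summable μ hμ t hdisc _ hSsimple hSsum v hv z hzt
    have hzw : z - w ≠ 0 := sub_ne_zero.mpr hz
    have hterm : ∀ n, u n / ((z - (t n : ℂ)) * deriv S (t n)) =
        (z - (starRingEnd ℂ) w) / (z - w) * (v n / ((z - (t n : ℂ)) * deriv S (t n))) +
        ((starRingEnd ℂ) w - w) / (z - w) * (v n / ((w - (t n : ℂ)) * deriv S (t n))) := by
      intro n
      have h1 : z - (t n : ℂ) ≠ 0 := sub_ne_zero.mpr (hzt n)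
      have h2 : w - (t n : ℂ) ≠ 0 := sub_ne_zero.mpr (hwt n)
      have h3 := hSsimple n
      have h4 := htw n
      rw [hu]
      field_simp
      ring
    rw [Xfun_off S t u z hzt, Xfun_off S t v z hzt, tsum_congr hterm,
      Summable.tsum_add (hAsum.mul_left _) (hBsum.mul_left _), tsum_mul_left, tsum_mul_left, hB,
      mul_zero, add_zero]
    ring
end
end

section
/- Let 𝓗 be a complex linear subspace of functions ℂ → ℂ consisting of entire functions such that the evaluation map F ↦ (F(tₙ))ₙ is a linear bijection of 𝓗 onto ℓ²(μ), and such that, with the norm ‖F‖² = ∑ₙ μₙ|F(tₙ)|², 𝓗 satisfies: (H1) whenever F ∈ 𝓗 vanishes at a non-real point w, the function z ↦ F(z)(z − conj w)/(z − w) belongs to 𝓗; (H2) every point-evaluation functional F ↦ F(w), w ∈ ℂ, is continuous on 𝓗; (H3) F ∈ 𝓗 implies F* ∈ 𝓗, where F*(z) = conj(F(conj z)). Then there exists another complex linear subspace 𝓗̃ consisting of entire functions such that: (i) the evaluation map F ↦ (F(tₙ))ₙ is a linear bijection of 𝓗̃ onto ℓ²(μ) (so 𝓗̃ is isometrically isomorphic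 to ℓ²(μ) via the norm ‖F‖² = ∑ₙ μₙ|F(tₙ)|²); (ii) 𝓗̃ satisfies (H1) and (H3); (iii) 𝓗̃ violates (H2): there exist a point z₀ ∈ ℂ, a function G ∈ 𝓗̃, and a sequence of functions Fₖ ∈ 𝓗̃ such that (Fₖ(tₙ))ₙ converges to (G(tₙ))ₙ in ℓ²(μ) but Fₖ(z₀) does not converge to G(z₀); and (iv) 𝓗 ∩ 𝓗̃ is dense in both 𝓗 and 𝓗̃ (i.e., the set of sequences (F(tₙ))ₙ with F ∈ 𝓗 ∩ 𝓗̃ is dense in ℓ²(μ)). -/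
/-!
Let `G₀ ∈ 𝓗` take the values `δₙ₀` at the nodes and put `A(z) = (z - t₀) G₀(z)`. Then `A`
vanishes at every node, and (H1) together with injectivity of sampling shows that `G₀`, hence `A`,
has no zeros off the real line. For a linear functional `λ` on sequences, the space
`𝓗̃ = {F + λ((F(tₙ))ₙ) A : F ∈ 𝓗}` has the same node values as `𝓗`, so sampling is again a
bijection onto `ℓ²(μ)`.

Let `J = {v : ((tₙ - i) vₙ)ₙ ∈ ℓ²(μ)}`. It contains the finitely supported sequences and, since
`|tₙ - i| ≤ C |tₙ - w|`, every difference `(b_w(tₙ) - 1) vₙ` with `b_w(x) = (x - w̄)/(x - w)` and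
`v ∈ ℓ²(μ)`. If `λ` vanishes on `J`, (H1) passes from `𝓗` to `𝓗̃`: dividing `F - (F(w)/A(w)) A`
by the Blaschke factor inside `𝓗` multiplies the node values by `b_w(tₙ)` and so leaves `λ`
unchanged. If moreover `λ` commutes with conjugation, (H3) passes as well. Because `|tₙ| → ∞`,
some real `v₀ ∈ ℓ²(μ)` lies outside `J`, and we take `λ(v₀) = 1`. The tails of `v₀` tend to `0`
in `ℓ²(μ)`, yet by (H2) for `𝓗` the corresponding elements of `𝓗̃` tend to `A(i) ≠ 0` at `i`.
Truncated sequences have `λ = 0`, so their `𝓗`-interpolants lie in `𝓗 ∩ 𝓗̃`, and they are dense.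
-/

noncomputable section

/-- Membership in the weighted ℓ² space: `∑ n, μ n * ‖v n‖² < ∞`. -/
def Meml2 (μ : ℕ → ℝ) (v : ℕ → ℂ) : Prop :=
  Summable fun n => μ n * ‖v n‖ ^ 2

open Filter Topology ComplexConjugate

section WeightedL2

variable {μ : ℕ → ℝ}

theorem Meml2.of_norm_le (hμ : ∀ n, 0 ≤ μ n) {v u : ℕ → ℂ} (hv : Meml2 μ v) (C : ℝ)
    (h : ∀ n, ‖u n‖ ≤ C * ‖v n‖) : Meml2 μ u := by
  refine (Summable.mul_left (C ^ 2) hv).of_nonneg_of_le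
    (fun n => by have := hμ n; positivity) fun n => ?_
  have hsq : ‖u n‖ ^ 2 ≤ (C * ‖v n‖) ^ 2 := pow_le_pow_left₀ (norm_nonneg _) (h n) 2
  calc μ n * ‖u n‖ ^ 2 ≤ μ n * (C * ‖v n‖) ^ 2 := mul_le_mul_of_nonneg_left hsq (hμ n)
    _ = C ^ 2 * (μ n * ‖v n‖ ^ 2) := by ring

theorem Meml2.add (hμ : ∀ n, 0 ≤ μ n) {v u : ℕ → ℂ} (hv : Meml2 μ v) (hu : Meml2 μ u) :
    Meml2 μ fun n => v n + u n := by
  refine ((Summable.mul_left 2 hv).add (Summable.mul_left 2 hu)).of_nonneg_of_le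
    (fun n => by have := hμ n; positivity) fun n => ?_
  have hsq : ‖v n + u n‖ ^ 2 ≤ 2 * ‖v n‖ ^ 2 + 2 * ‖u n‖ ^ 2 := by
    nlinarith [norm_add_le (v n) (u n), norm_nonneg (v n + u n), sq_nonneg (‖v n‖ - ‖u n‖)]
  have := mul_le_mul_of_nonneg_left hsq (hμ n)
  linarith

theorem meml2_of_forall_notMem_eq_zero (μ : ℕ → ℝ) {v : ℕ → ℂ} (s : Finset ℕ)
    (h : ∀ n ∉ s, v n = 0) : Meml2 μ v :=
  summable_of_ne_finset_zero (s := s) fun n hn => by simp [h n hn]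

theorem meml2_single (μ : ℕ → ℝ) (n : ℕ) : Meml2 μ (Pi.single n 1 : ℕ → ℂ) :=
  meml2_of_forall_notMem_eq_zero μ {n} fun m hm => by simp_all

theorem meml2_indicator_finset (μ : ℕ → ℝ) (s : Finset ℕ) (v : ℕ → ℂ) :
    Meml2 μ ((s : Set ℕ).indicator v) :=
  meml2_of_forall_notMem_eq_zero μ s fun _ hn => Set.indicator_of_notMem (Finset.mem_coe.not.2 hn) v

theorem tendsto_tsum_sub_indicator_range (μ : ℕ → ℝ) (v : ℕ → ℂ) :
    Tendsto (fun k => ∑' n, μ n * ‖v n - (Finset.range k : Set ℕ).indicator v n‖ ^ 2)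
      atTop (𝓝 0) := by
  refine ((tendsto_tsum_compl_atTop_zero fun n => μ n * ‖v n‖ ^ 2).comp
    tendsto_finset_range).congr fun k => ?_
  refine (tsum_subtype ((Finset.range k : Set ℕ)ᶜ) fun n => μ n * ‖v n‖ ^ 2).trans
    (tsum_congr fun n => ?_)
  by_cases hn : n < k <;> simp [Set.indicator_apply, hn]

end WeightedL2

section MulDomain

variable {μ : ℕ → ℝ}

def mulDomain (μ : ℕ → ℝ) (hμ : ∀ n, 0 ≤ μ n) (d : ℕ → ℂ) : Submodule ℂ (ℕ → ℂ) where
  carrier := {v | Meml2 μ fun n => d n * v n}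
  add_mem' {v u} hv hu := by
    simpa only [Set.mem_ofPred_eq, Pi.add_apply, mul_add] using hv.add hμ hu
  zero_mem' := meml2_of_forall_notMem_eq_zero μ ∅ fun n _ => by simp
  smul_mem' c v hv := hv.of_norm_le hμ ‖c‖ fun n => by
    simp only [Pi.smul_apply, smul_eq_mul, norm_mul]; rw [mul_left_comm]

theorem star_mem_mulDomain (hμ : ∀ n, 0 ≤ μ n) {d v : ℕ → ℂ} (hv : v ∈ mulDomain μ hμ d) :
    star v ∈ mulDomain μ hμ d :=
  Meml2.of_norm_le hμ hv 1 fun n => by simp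

theorem indicator_mem_mulDomain (hμ : ∀ n, 0 ≤ μ n) (d : ℕ → ℂ) (s : Finset ℕ) (v : ℕ → ℂ) :
    (s : Set ℕ).indicator v ∈ mulDomain μ hμ d :=
  meml2_of_forall_notMem_eq_zero μ s fun n hn => by
    simp [Set.indicator_of_notMem (Finset.mem_coe.not.2 hn)]

theorem norm_ofReal_sub_I_le {w : ℂ} (hw : w.im ≠ 0) (x : ℝ) :
    ‖(x : ℂ) - Complex.I‖ ≤ (1 + ‖w - Complex.I‖ / |w.im|) * ‖(x : ℂ) - w‖ := by
  have him : |w.im| ≤ ‖(x : ℂ) - w‖ := by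
    simpa using Complex.abs_im_le_norm ((x : ℂ) - w)
  have hw' : ‖w - Complex.I‖ ≤ ‖w - Complex.I‖ / |w.im| * ‖(x : ℂ) - w‖ := by
    rw [div_mul_eq_mul_div, le_div_iff₀ (abs_pos.2 hw)]
    exact mul_le_mul_of_nonneg_left him (norm_nonneg _)
  calc ‖(x : ℂ) - Complex.I‖ ≤ ‖(x : ℂ) - w‖ + ‖w - Complex.I‖ :=
        norm_sub_le_norm_sub_add_norm_sub _ _ _
    _ ≤ _ := by linarith

theorem sub_mem_mulDomain_of_blaschke (hμ : ∀ n, 0 ≤ μ n) {t : ℕ → ℝ} {w : ℂ} (hw : w.im ≠ 0)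
    {v u : ℕ → ℂ} (hv : Meml2 μ v) (huv : ∀ n, ((t n : ℂ) - w) * u n = ((t n : ℂ) - conj w) * v n) :
    u - v ∈ mulDomain μ hμ fun n => (t n : ℂ) - Complex.I := by
  refine Meml2.of_norm_le hμ hv ((1 + ‖w - Complex.I‖ / |w.im|) * ‖w - conj w‖) fun n => ?_
  have hdiff : ((t n : ℂ) - w) * (u n - v n) = (w - conj w) * v n := by linear_combination huv n
  calc ‖((t n : ℂ) - Complex.I) * (u - v) n‖
      ≤ (1 + ‖w - Complex.I‖ / |w.im|) * ‖(t n : ℂ) - w‖ * ‖u n - v n‖ := by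
        rw [Pi.sub_apply, norm_mul]
        exact mul_le_mul_of_nonneg_right (norm_ofReal_sub_I_le hw _) (norm_nonneg _)
    _ = (1 + ‖w - Complex.I‖ / |w.im|) * ‖w - conj w‖ * ‖v n‖ := by
        rw [mul_assoc, ← norm_mul, hdiff, norm_mul, mul_assoc]

theorem exists_meml2_notMem_mulDomain (hμ : ∀ n, 0 < μ n) {d : ℕ → ℂ}
    (hd : Tendsto (fun n => ‖d n‖) atTop atTop) :
    ∃ v : ℕ → ℝ, Meml2 μ (fun n => (v n : ℂ)) ∧
      (fun n => (v n : ℂ)) ∉ mulDomain μ (fun n => (hμ n).le) d := by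
  obtain ⟨φ, hφ, hdφ⟩ := extraction_forall_of_eventually
    (P := fun k n => (k : ℝ) + 1 ≤ ‖d n‖) fun k => hd.eventually_ge_atTop _
  set c : ℕ → ℝ := fun k => 1 / ((k + 1) * √(μ (φ k)))
  have hc : ∀ k, μ (φ k) * ‖(c k : ℂ)‖ ^ 2 = 1 / ((k : ℝ) + 1) ^ 2 := fun k => by
    have := hμ (φ k)
    rw [Complex.norm_real, Real.norm_eq_abs, sq_abs, div_pow, mul_pow, Real.sq_sqrt this.le]
    field_simp
  set v : ℕ → ℝ := Function.extend φ c 0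
  have hvφ : ∀ k, v (φ k) = c k := hφ.injective.extend_apply c 0
  have hv0 : ∀ n ∉ Set.range φ, v n = 0 := fun n hn => Function.extend_apply' _ _ _ hn
  refine ⟨v, ?_, fun hmem => ?_⟩
  · rw [Meml2, ← hφ.injective.summable_iff fun n hn => by simp [hv0 n hn]]
    have hsum : Summable fun k : ℕ => 1 / ((k : ℝ) + 1) ^ 2 := by
      simpa using (summable_nat_add_iff 1).2 (Real.summable_one_div_nat_pow.2 one_lt_two)
    exact hsum.congr fun k => by rw [Function.comp_apply, hvφ, hc]
  · have hsum := (hφ.injective.summable_iff fun n hn => by simp [hv0 n hn]).2 hmem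
    obtain ⟨k, hk⟩ := (hsum.tendsto_atTop_zero.eventually (gt_mem_nhds one_pos)).exists
    refine hk.not_ge ?_
    have hdk : ((k : ℝ) + 1) ^ 2 ≤ ‖d (φ k)‖ ^ 2 := pow_le_pow_left₀ (by positivity) (hdφ k) 2
    calc (1 : ℝ) ≤ ‖d (φ k)‖ ^ 2 * (1 / ((k : ℝ) + 1) ^ 2) := by
          rw [mul_one_div, le_div_iff₀ (by positivity), one_mul]; exact hdk
      _ = _ := by simp only [← hc, Function.comp_apply, hvφ, norm_mul]; ring

end MulDomain

theorem tendsto_norm_ofReal_sub_I {t : ℕ → ℝ} (ht : ∀ R : ℝ, {n : ℕ | |t n| ≤ R}.Finite) :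
    Tendsto (fun n => ‖(t n : ℂ) - Complex.I‖) atTop atTop := by
  refine tendsto_atTop_mono (f := fun n => |t n|) (fun n => ?_) (tendsto_atTop.2 fun R => ?_)
  · simpa using Complex.abs_re_le_norm ((t n : ℂ) - Complex.I)
  · rw [← Nat.cofinite_eq_atTop, eventually_cofinite]
    exact (ht R).subset fun n hn => (not_le.1 hn).le

theorem exists_linearMap_eq_one_of_star {V : Type*} [AddCommGroup V] [Module ℂ V]
    [StarAddMonoid V] [StarModule ℂ V] {J : Submodule ℂ V} (hJ : ∀ v ∈ J, star v ∈ J) {v₀ : V}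
    (hv₀ : star v₀ = v₀) (hv₀J : v₀ ∉ J) :
    ∃ l : V →ₗ[ℂ] ℂ, l v₀ = 1 ∧ (∀ v ∈ J, l v = 0) ∧ ∀ v, l (star v) = conj (l v) := by
  obtain ⟨f, hf₀, hfJ⟩ := J.exists_dual_map_eq_bot_of_notMem hv₀J inferInstance
  set g : V →ₗ[ℂ] ℂ := (f v₀)⁻¹ • f
  have hg₀ : g v₀ = 1 := inv_mul_cancel₀ hf₀
  have hgJ : ∀ v ∈ J, g v = 0 := fun v hv => by
    simp [g, (Submodule.mem_bot ℂ).1 (hfJ ▸ Submodule.mem_map_of_mem hv)]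
  -- `v ↦ conj (g (star v))` is again `ℂ`-linear; averaging makes `g` commute with `star`.
  let gstar : V →ₗ[ℂ] ℂ :=
    { toFun := fun v => conj (g (star v))
      map_add' := fun v u => by simp
      map_smul' := fun c v => by simp [star_smul] }
  refine ⟨(2 : ℂ)⁻¹ • (g + gstar), ?_, fun v hv => ?_, fun v => ?_⟩
  · simp [gstar, hv₀, hg₀]
    norm_num
  · simp [gstar, hgJ v hv, hgJ _ (hJ v hv)]
  · simp [gstar, map_ofNat]
    ring

structure IsSamplingSpace (μ : ℕ → ℝ) (t : ℕ → ℝ) (H : Submodule ℂ (ℂ → ℂ)) : Prop where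
  differentiable : ∀ F ∈ H, Differentiable ℂ F
  meml2 : ∀ F ∈ H, Meml2 μ fun n => F (t n)
  eq_of_eq_on_nodes : ∀ F ∈ H, ∀ G ∈ H, (∀ n, F (t n) = G (t n)) → F = G
  exists_eq_on_nodes : ∀ v, Meml2 μ v → ∃ F ∈ H, ∀ n, F (t n) = v n

def DeBrangesH1 (H : Submodule ℂ (ℂ → ℂ)) : Prop :=
  ∀ F ∈ H, ∀ w : ℂ, w.im ≠ 0 → F w = 0 →
    ∃ G ∈ H, ∀ z : ℂ, z ≠ w → G z = F z * (z - conj w) / (z - w)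

def DeBrangesH3 (H : Submodule ℂ (ℂ → ℂ)) : Prop :=
  ∀ F ∈ H, (fun z => conj (F (conj z))) ∈ H

theorem ofReal_ne_of_im_ne_zero {w : ℂ} (hw : w.im ≠ 0) (x : ℝ) : (x : ℂ) ≠ w :=
  fun h => hw (h ▸ Complex.ofReal_im x)

theorem sub_conj_ne_zero {w : ℂ} (hw : w.im ≠ 0) : w - conj w ≠ 0 := by
  simp [Complex.sub_conj, hw]

namespace IsSamplingSpace

variable {μ : ℕ → ℝ} {t : ℕ → ℝ} {H : Submodule ℂ (ℂ → ℂ)}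

def cardinal (hH : IsSamplingSpace μ t H) (n : ℕ) : ℂ → ℂ :=
  (hH.exists_eq_on_nodes _ (meml2_single μ n)).choose

theorem cardinal_mem (hH : IsSamplingSpace μ t H) (n : ℕ) : hH.cardinal n ∈ H :=
  (hH.exists_eq_on_nodes _ (meml2_single μ n)).choose_spec.1

theorem cardinal_apply_node (hH : IsSamplingSpace μ t H) (n m : ℕ) :
    hH.cardinal n (t m) = (Pi.single n 1 : ℕ → ℂ) m :=
  (hH.exists_eq_on_nodes _ (meml2_single μ n)).choose_spec.2 m

theorem cardinal_apply_ne_zero (hH : IsSamplingSpace μ t H) (h1 : DeBrangesH1 H) (n : ℕ) {w : ℂ}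
    (hw : w.im ≠ 0) : hH.cardinal n w ≠ 0 := by
  intro hzero
  set G := hH.cardinal n
  obtain ⟨G', hG'H, hG'⟩ := h1 G (hH.cardinal_mem n) w hw hzero
  set b := ((t n : ℂ) - conj w) / ((t n : ℂ) - w)
  have hb : b * ((t n : ℂ) - w) = (t n : ℂ) - conj w :=
    div_mul_cancel₀ _ (sub_ne_zero.2 (ofReal_ne_of_im_ne_zero hw _))
  have hG'b : G' = b • G := by
    refine hH.eq_of_eq_on_nodes _ hG'H _ (H.smul_mem b (hH.cardinal_mem n)) fun m => ?_
    simp only [hG' _ (ofReal_ne_of_im_ne_zero hw _), Pi.smul_apply, smul_eq_mul, G,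
      cardinal_apply_node]
    rcases eq_or_ne m n with rfl | hmn
    · simp [b]
    · simp [hmn]
  have hG0 : ∀ z ∉ ({w, (t n : ℂ)} : Set ℂ), G z = 0 := fun z hz => by
    simp only [Set.mem_insert_iff, Set.mem_singleton_iff, not_or] at hz
    have h := hG' z hz.1
    rw [hG'b, Pi.smul_apply, smul_eq_mul, eq_div_iff (sub_ne_zero.2 hz.1)] at h
    have : G z * ((w - conj w) * (z - t n)) = 0 := by
      linear_combination ((t n : ℂ) - w) * h - G z * (z - w) * hb
    simpa [sub_conj_ne_zero hw, sub_ne_zero.2 hz.2] using this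
  have hG : G = 0 := Continuous.ext_on ((Set.toFinite _).countable.dense_compl ℂ)
    (hH.differentiable _ (hH.cardinal_mem n)).continuous continuous_const hG0
  simpa [G, cardinal_apply_node] using congr_fun hG (t n)

def nodal (hH : IsSamplingSpace μ t H) (z : ℂ) : ℂ := (z - t 0) * hH.cardinal 0 z

theorem nodal_apply_node (hH : IsSamplingSpace μ t H) (m : ℕ) : hH.nodal (t m) = 0 := by
  rcases eq_or_ne m 0 with rfl | hm
  · simp [nodal]
  · simp [nodal, cardinal_apply_node, hm]

theorem differentiable_nodal (hH : IsSamplingSpace μ t H) : Differentiable ℂ hH.nodal :=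
  (differentiable_id.sub_const _).mul (hH.differentiable _ (hH.cardinal_mem 0))

theorem nodal_ne_zero (hH : IsSamplingSpace μ t H) (h1 : DeBrangesH1 H) {w : ℂ}
    (hw : w.im ≠ 0) : hH.nodal w ≠ 0 :=
  mul_ne_zero (sub_ne_zero.2 (ofReal_ne_of_im_ne_zero hw _).symm)
    (hH.cardinal_apply_ne_zero h1 0 hw)

theorem conj_nodal_conj (hH : IsSamplingSpace μ t H) (h3 : DeBrangesH3 H) (z : ℂ) :
    conj (hH.nodal (conj z)) = hH.nodal z := by
  have hG : (fun z => conj (hH.cardinal 0 (conj z))) = hH.cardinal 0 :=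
    hH.eq_of_eq_on_nodes _ (h3 _ (hH.cardinal_mem 0)) _ (hH.cardinal_mem 0) fun n => by
      rcases eq_or_ne n 0 with rfl | hn <;> simp [cardinal_apply_node, *]
  simp [nodal, ← congr_fun hG z]

/-- Division by the Blaschke factor `(z - w) / (z - conj w)` inside `H`, after subtracting the
multiple of `nodal` that makes `F` vanish at `w`. -/
theorem exists_blaschke_shift (hH : IsSamplingSpace μ t H) (h1 : DeBrangesH1 H) {F : ℂ → ℂ}
    (hF : F ∈ H) {w : ℂ} (hw : w.im ≠ 0) :
    ∃ F' ∈ H, ∀ z ≠ w, (z - w) * F' z * hH.nodal w =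
      (z - conj w) * F z * hH.nodal w - (w - conj w) * F w * hH.nodal z := by
  set G := hH.cardinal 0
  have hGw : G w ≠ 0 := hH.cardinal_apply_ne_zero h1 0 hw
  set c := F w / G w
  have hc : c * G w = F w := div_mul_cancel₀ _ hGw
  obtain ⟨F₁, hF₁, hF₁eq⟩ := h1 (F - c • G)
    (H.sub_mem hF (H.smul_mem c (hH.cardinal_mem 0))) w hw (by simp [hc])
  set b := ((t 0 : ℂ) - conj w) / ((t 0 : ℂ) - w)
  have hb : b * ((t 0 : ℂ) - w) = (t 0 : ℂ) - conj w :=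
    div_mul_cancel₀ _ (sub_ne_zero.2 (ofReal_ne_of_im_ne_zero hw _))
  refine ⟨F₁ + (c * b) • G, H.add_mem hF₁ (H.smul_mem _ (hH.cardinal_mem 0)), fun z hz => ?_⟩
  have h := hF₁eq z hz
  rw [eq_div_iff (sub_ne_zero.2 hz)] at h
  simp only [nodal, Pi.add_apply, Pi.smul_apply, Pi.sub_apply, smul_eq_mul] at h ⊢
  linear_combination (w - t 0) * G w * h - c * G w * G z * (z - w) * hb
    - (w - conj w) * (z - t 0) * G z * hc

end IsSamplingSpace

def perturb (t : ℕ → ℝ) (lam : (ℕ → ℂ) →ₗ[ℂ] ℂ) (A : ℂ → ℂ) : (ℂ → ℂ) →ₗ[ℂ] ℂ → ℂ :=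
  LinearMap.id + (lam ∘ₗ LinearMap.funLeft ℂ ℂ fun n => (t n : ℂ)).smulRight A

section Perturb

variable {μ : ℕ → ℝ} {t : ℕ → ℝ} {H : Submodule ℂ (ℂ → ℂ)} {lam : (ℕ → ℂ) →ₗ[ℂ] ℂ}
  {A : ℂ → ℂ}

theorem perturb_apply (F : ℂ → ℂ) (z : ℂ) :
    perturb t lam A F z = F z + lam (fun n => F (t n)) * A z :=
  rfl

theorem perturb_apply_node (hA : ∀ n, A (t n) = 0) (F : ℂ → ℂ) (n : ℕ) :
    perturb t lam A F (t n) = F (t n) := by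
  simp [perturb_apply, hA]

theorem perturb_eq_self {F : ℂ → ℂ} (h : lam (fun n => F (t n)) = 0) : perturb t lam A F = F :=
  funext fun z => by simp [perturb_apply, h]

theorem IsSamplingSpace.map_perturb (hH : IsSamplingSpace μ t H) (hA : Differentiable ℂ A)
    (hA0 : ∀ n, A (t n) = 0) : IsSamplingSpace μ t (H.map (perturb t lam A)) where
  differentiable := by
    rintro _ ⟨F, hF, rfl⟩
    exact (hH.differentiable F hF).add (hA.const_mul _)
  meml2 := by
    rintro _ ⟨F, hF, rfl⟩
    simpa only [perturb_apply_node hA0] using hH.meml2 F hF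
  eq_of_eq_on_nodes := by
    rintro _ ⟨F, hF, rfl⟩ _ ⟨G, hG, rfl⟩ h
    simp only [perturb_apply_node hA0] at h
    rw [hH.eq_of_eq_on_nodes F hF G hG h]
  exists_eq_on_nodes v hv := by
    obtain ⟨F, hF, hFv⟩ := hH.exists_eq_on_nodes v hv
    exact ⟨_, ⟨F, hF, rfl⟩, fun n => by rw [perturb_apply_node hA0, hFv]⟩

theorem DeBrangesH3.map_perturb (h3 : DeBrangesH3 H) (hA : ∀ z, conj (A (conj z)) = A z)
    (hlam : ∀ v, lam (star v) = conj (lam v)) : DeBrangesH3 (H.map (perturb t lam A)) := by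
  rintro _ ⟨F, hF, rfl⟩
  refine ⟨_, h3 F hF, funext fun z => ?_⟩
  have hstar : (fun n => conj (F (conj (t n)))) = star fun n => F (t n) :=
    funext fun n => by simp
  simp only [perturb_apply, hstar, hlam, map_add, map_mul, hA]

theorem IsSamplingSpace.deBrangesH1_map_perturb (hH : IsSamplingSpace μ t H)
    (h1 : DeBrangesH1 H)
    (hlam : ∀ w : ℂ, w.im ≠ 0 → ∀ v u : ℕ → ℂ, Meml2 μ v →
      (∀ n, ((t n : ℂ) - w) * u n = ((t n : ℂ) - conj w) * v n) → lam u = lam v) :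
    DeBrangesH1 (H.map (perturb t lam hH.nodal)) := by
  rintro _ ⟨F, hF, rfl⟩ w hw hFw
  obtain ⟨F', hF', hF'eq⟩ := hH.exists_blaschke_shift h1 hF hw
  have hAw := hH.nodal_ne_zero h1 hw
  have hnode : ∀ n, ((t n : ℂ) - w) * F' (t n) = ((t n : ℂ) - conj w) * F (t n) := fun n => by
    have := hF'eq (t n) (ofReal_ne_of_im_ne_zero hw _)
    rw [hH.nodal_apply_node, mul_zero, sub_zero] at this
    exact mul_right_cancel₀ hAw this
  refine ⟨_, ⟨F', hF', rfl⟩, fun z hz => ?_⟩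
  rw [perturb_apply] at hFw
  rw [perturb_apply, perturb_apply, hlam w hw _ _ (hH.meml2 F hF) hnode,
    eq_div_iff (sub_ne_zero.2 hz)]
  refine mul_right_cancel₀ hAw ?_
  linear_combination hF'eq z hz - (w - conj w) * hH.nodal z * hFw

theorem IsSamplingSpace.exists_mem_map_perturb_near (hH : IsSamplingSpace μ t H)
    (hlam : ∀ v k, lam ((Finset.range k : Set ℕ).indicator v) = 0) (v : ℕ → ℂ) {ε : ℝ}
    (hε : 0 < ε) :
    ∃ F, F ∈ H ∧ F ∈ H.map (perturb t lam A) ∧ √(∑' n, μ n * ‖v n - F (t n)‖ ^ 2) < ε := by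
  obtain ⟨k, hk⟩ := ((tendsto_tsum_sub_indicator_range μ v).eventually
    (gt_mem_nhds (pow_pos hε 2))).exists
  obtain ⟨F, hF, hFv⟩ := hH.exists_eq_on_nodes _
    (meml2_indicator_finset μ (Finset.range k) v)
  have hFt : (fun n => F (t n)) = (Finset.range k : Set ℕ).indicator v := funext hFv
  refine ⟨F, hF, ⟨F, hF, perturb_eq_self (by rw [hFt, hlam])⟩, ?_⟩
  rw [Real.sqrt_lt' hε]
  simpa only [hFv] using hk

theorem IsSamplingSpace.exists_not_tendsto_map_perturb (hH : IsSamplingSpace μ t H)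
    (hA0 : ∀ n, A (t n) = 0) {w : ℂ} (hAw : A w ≠ 0)
    (hH2 : ∃ C : ℝ, ∀ F ∈ H, ‖F w‖ ≤ C * √(∑' n, μ n * ‖F (t n)‖ ^ 2))
    {v : ℕ → ℂ} (hv : Meml2 μ v) (hlam_v : lam v = 1)
    (hlam : ∀ k, lam ((Finset.range k : Set ℕ).indicator v) = 0) :
    ∃ (z₀ : ℂ) (G : ℂ → ℂ) (F : ℕ → ℂ → ℂ),
      G ∈ H.map (perturb t lam A) ∧ (∀ k, F k ∈ H.map (perturb t lam A)) ∧
      Tendsto (fun k => ∑' n, μ n * ‖F k (t n) - G (t n)‖ ^ 2) atTop (𝓝 0) ∧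
      ¬ Tendsto (fun k => F k z₀) atTop (𝓝 (G z₀)) := by
  obtain ⟨C, hC⟩ := hH2
  obtain ⟨F₀, hF₀, hF₀v⟩ := hH.exists_eq_on_nodes v hv
  choose Q hQ hQv using fun k =>
    hH.exists_eq_on_nodes _ (meml2_indicator_finset μ (Finset.range k) v)
  set P : ℕ → ℂ → ℂ := fun k => F₀ - Q k
  have hP : ∀ k, P k ∈ H := fun k => H.sub_mem hF₀ (hQ k)
  have hPv : ∀ k n, P k (t n) = v n - (Finset.range k : Set ℕ).indicator v n := fun k n => by
    simp [P, hF₀v, hQv]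
  have hlamP : ∀ k, lam (fun n => P k (t n)) = 1 := fun k => by
    rw [funext (hPv k), ← Pi.sub_def, map_sub, hlam_v, hlam, sub_zero]
  have htail := tendsto_tsum_sub_indicator_range μ v
  refine ⟨w, 0, fun k => perturb t lam A (P k), zero_mem _, fun k => ⟨P k, hP k, rfl⟩, ?_, ?_⟩
  · simpa only [perturb_apply_node hA0, hPv, Pi.zero_apply, sub_zero] using htail
  · have hPw : Tendsto (fun k => P k w) atTop (𝓝 0) := by
      have hbound : Tendsto (fun k => C * √(∑' n, μ n * ‖P k (t n)‖ ^ 2)) atTop (𝓝 0) := by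
        simpa only [hPv, Real.sqrt_zero, mul_zero] using htail.sqrt.const_mul C
      exact squeeze_zero_norm (fun k => hC _ (hP k)) hbound
    have : Tendsto (fun k => perturb t lam A (P k) w) atTop (𝓝 (A w)) := by
      simpa only [perturb_apply, hlamP, one_mul, zero_add] using hPw.add_const (A w)
    exact fun h => hAw (tendsto_nhds_unique this h)

end Perturb

theorem exists_space_satisfying_H1_H3_but_not_H2_general
    (μ : ℕ → ℝ) (hμ : ∀ n, 0 < μ n)
    (t : ℕ → ℝ)
    (hdisc : ∀ R : ℝ, {n : ℕ | |t n| ≤ R}.Finite)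
    (H : Set (ℂ → ℂ))
    -- 𝓗 is a complex linear subspace of entire functions
    (hH0 : (0 : ℂ → ℂ) ∈ H)
    (hHadd : ∀ F ∈ H, ∀ G ∈ H, F + G ∈ H)
    (hHsmul : ∀ c : ℂ, ∀ F ∈ H, c • F ∈ H)
    (hHentire : ∀ F ∈ H, Differentiable ℂ F)
    -- evaluation is a bijection onto ℓ²(μ)
    (hHl2 : ∀ F ∈ H, Meml2 μ (fun n => F (t n)))
    (hHinj : ∀ F ∈ H, ∀ G ∈ H, (∀ n : ℕ, F (t n) = G (t n)) → F = G)
    (hHsurj : ∀ v : ℕ → ℂ, Meml2 μ v → ∃ F ∈ H, ∀ n : ℕ, F (t n) = v n)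
    -- (H1)
    (hH1 : ∀ F ∈ H, ∀ w : ℂ, w.im ≠ 0 → F w = 0 →
      ∃ G ∈ H, ∀ z : ℂ, z ≠ w → G z = F z * (z - (starRingEnd ℂ) w) / (z - w))
    -- (H2): every point evaluation is a bounded (hence continuous) functional
    (hH2 : ∀ w : ℂ, ∃ C : ℝ, ∀ F ∈ H,
      ‖F w‖ ≤ C * Real.sqrt (∑' n : ℕ, μ n * ‖F (t n)‖ ^ 2))
    -- (H3)
    (hH3 : ∀ F ∈ H, (fun z => (starRingEnd ℂ) (F ((starRingEnd ℂ) z))) ∈ H) :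
    ∃ Ht : Set (ℂ → ℂ),
      -- (i) 𝓗̃ is a complex linear subspace of entire functions, and evaluation
      -- is a bijection of 𝓗̃ onto ℓ²(μ)
      (0 : ℂ → ℂ) ∈ Ht ∧
      (∀ F ∈ Ht, ∀ G ∈ Ht, F + G ∈ Ht) ∧
      (∀ c : ℂ, ∀ F ∈ Ht, c • F ∈ Ht) ∧
      (∀ F ∈ Ht, Differentiable ℂ F) ∧
      (∀ F ∈ Ht, Meml2 μ (fun n => F (t n))) ∧
      (∀ F ∈ Ht, ∀ G ∈ Ht, (∀ n : ℕ, F (t n) = G (t n)) → F = G) ∧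
      (∀ v : ℕ → ℂ, Meml2 μ v → ∃ F ∈ Ht, ∀ n : ℕ, F (t n) = v n) ∧
      -- (ii) 𝓗̃ satisfies (H1) and (H3)
      (∀ F ∈ Ht, ∀ w : ℂ, w.im ≠ 0 → F w = 0 →
        ∃ G ∈ Ht, ∀ z : ℂ, z ≠ w → G z = F z * (z - (starRingEnd ℂ) w) / (z - w)) ∧
      (∀ F ∈ Ht, (fun z => (starRingEnd ℂ) (F ((starRingEnd ℂ) z))) ∈ Ht) ∧
      -- (iii) 𝓗̃ violates (H2): some point evaluation is discontinuous
      (∃ (z₀ : ℂ) (G : ℂ → ℂ) (F : ℕ → ℂ → ℂ),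
        G ∈ Ht ∧ (∀ k : ℕ, F k ∈ Ht) ∧
        Filter.Tendsto (fun k => ∑' n : ℕ, μ n * ‖F k (t n) - G (t n)‖ ^ 2)
          Filter.atTop (nhds 0) ∧
        ¬ Filter.Tendsto (fun k => F k z₀) Filter.atTop (nhds (G z₀))) ∧
      -- (iv) 𝓗 ∩ 𝓗̃ is dense in 𝓗 and 𝓗̃ (via the isometries with ℓ²(μ))
      (∀ v : ℕ → ℂ, Meml2 μ v → ∀ ε : ℝ, 0 < ε →
        ∃ F, F ∈ H ∧ F ∈ Ht ∧
          Real.sqrt (∑' n : ℕ, μ n * ‖v n - F (t n)‖ ^ 2) < ε) := by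
  let 𝓗 : Submodule ℂ (ℂ → ℂ) :=
    { carrier := H, add_mem' := fun hF hG => hHadd _ hF _ hG, zero_mem' := hH0,
      smul_mem' := hHsmul }
  have hS : IsSamplingSpace μ t 𝓗 := ⟨hHentire, hHl2, hHinj, hHsurj⟩
  have hμ0 : ∀ n, 0 ≤ μ n := fun n => (hμ n).le
  obtain ⟨v₀, hv₀, hv₀J⟩ := exists_meml2_notMem_mulDomain hμ (tendsto_norm_ofReal_sub_I hdisc)
  obtain ⟨lam, hlam₀, hlamJ, hlam_star⟩ := exists_linearMap_eq_one_of_star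
    (fun _ hv => star_mem_mulDomain hμ0 hv) (funext fun n => Complex.conj_ofReal (v₀ n)) hv₀J
  have hlam_fin : ∀ v k, lam ((Finset.range k : Set ℕ).indicator v) = 0 := fun v k =>
    hlamJ _ (indicator_mem_mulDomain hμ0 _ _ v)
  have hlam_shift : ∀ w : ℂ, w.im ≠ 0 → ∀ v u : ℕ → ℂ, Meml2 μ v →
      (∀ n, ((t n : ℂ) - w) * u n = ((t n : ℂ) - conj w) * v n) → lam u = lam v :=
    fun w hw v u hv huv => sub_eq_zero.1 <| by
      rw [← map_sub]; exact hlamJ _ (sub_mem_mulDomain_of_blaschke hμ0 hw hv huv)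
  have hHt := hS.map_perturb (lam := lam) hS.differentiable_nodal hS.nodal_apply_node
  exact ⟨𝓗.map (perturb t lam hS.nodal), zero_mem _, fun _ hF _ hG => add_mem hF hG,
    fun c _ hF => Submodule.smul_mem _ c hF, hHt.differentiable, hHt.meml2,
    hHt.eq_of_eq_on_nodes, hHt.exists_eq_on_nodes, hS.deBrangesH1_map_perturb hH1 hlam_shift,
    DeBrangesH3.map_perturb hH3 (hS.conj_nodal_conj hH3) hlam_star,
    hS.exists_not_tendsto_map_perturb hS.nodal_apply_node
      (hS.nodal_ne_zero hH1 (w := Complex.I) (by simp)) (hH2 Complex.I) hv₀ hlam₀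
      (hlam_fin _),
    fun v _ ε hε => hS.exists_mem_map_perturb_near hlam_fin v hε⟩

/-- **Main Theorem.** Let `𝓗` be a de Branges space isometrically isomorphic to
`ℓ²(μ)` (a complex linear space of entire functions on which evaluation
`F ↦ (F(tₙ))ₙ` is a linear bijection onto `ℓ²(μ)`, satisfying (H1), (H2), (H3)
for the norm `‖F‖² = ∑ₙ μₙ|F(tₙ)|²`). Then there exists a Hilbert space of
entire functions `𝓗̃`, isometrically isomorphic to `ℓ²(μ)`, satisfying (H1)
and (H3) but violating (H2), with `𝓗 ∩ 𝓗̃` dense in both `𝓗` and `𝓗̃`.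
In (H1) the quotient `F(z)(z − conj w)/(z − w)` is understood with its
removable singularity at `w` filled in, i.e. as the unique entire member `G`
agreeing with it away from `w`. -/
theorem exists_space_satisfying_H1_H3_but_not_H2
    (μ : ℕ → ℝ) (hμ : ∀ n, 0 < μ n)
    (t : ℕ → ℝ) (ht : Function.Injective t)
    (hdisc : ∀ R : ℝ, {n : ℕ | |t n| ≤ R}.Finite)
    (H : Set (ℂ → ℂ))
    -- 𝓗 is a complex linear subspace of entire functions
    (hH0 : (0 : ℂ → ℂ) ∈ H)
    (hHadd : ∀ F ∈ H, ∀ G ∈ H, F + G ∈ H)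
    (hHsmul : ∀ c : ℂ, ∀ F ∈ H, c • F ∈ H)
    (hHentire : ∀ F ∈ H, Differentiable ℂ F)
    -- evaluation is a bijection onto ℓ²(μ)
    (hHl2 : ∀ F ∈ H, Meml2 μ (fun n => F (t n)))
    (hHinj : ∀ F ∈ H, ∀ G ∈ H, (∀ n : ℕ, F (t n) = G (t n)) → F = G)
    (hHsurj : ∀ v : ℕ → ℂ, Meml2 μ v → ∃ F ∈ H, ∀ n : ℕ, F (t n) = v n)
    -- (H1)
    (hH1 : ∀ F ∈ H, ∀ w : ℂ, w.im ≠ 0 → F w = 0 →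
      ∃ G ∈ H, ∀ z : ℂ, z ≠ w → G z = F z * (z - (starRingEnd ℂ) w) / (z - w))
    -- (H2): every point evaluation is a bounded (hence continuous) functional
    (hH2 : ∀ w : ℂ, ∃ C : ℝ, ∀ F ∈ H,
      ‖F w‖ ≤ C * Real.sqrt (∑' n : ℕ, μ n * ‖F (t n)‖ ^ 2))
    -- (H3)
    (hH3 : ∀ F ∈ H, (fun z => (starRingEnd ℂ) (F ((starRingEnd ℂ) z))) ∈ H) :
    ∃ Ht : Set (ℂ → ℂ),
      -- (i) 𝓗̃ is a complex linear subspace of entire functions, and evaluation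
      -- is a bijection of 𝓗̃ onto ℓ²(μ)
      (0 : ℂ → ℂ) ∈ Ht ∧
      (∀ F ∈ Ht, ∀ G ∈ Ht, F + G ∈ Ht) ∧
      (∀ c : ℂ, ∀ F ∈ Ht, c • F ∈ Ht) ∧
      (∀ F ∈ Ht, Differentiable ℂ F) ∧
      (∀ F ∈ Ht, Meml2 μ (fun n => F (t n))) ∧
      (∀ F ∈ Ht, ∀ G ∈ Ht, (∀ n : ℕ, F (t n) = G (t n)) → F = G) ∧
      (∀ v : ℕ → ℂ, Meml2 μ v → ∃ F ∈ Ht, ∀ n : ℕ, F (t n) = v n) ∧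
      -- (ii) 𝓗̃ satisfies (H1) and (H3)
      (∀ F ∈ Ht, ∀ w : ℂ, w.im ≠ 0 → F w = 0 →
        ∃ G ∈ Ht, ∀ z : ℂ, z ≠ w → G z = F z * (z - (starRingEnd ℂ) w) / (z - w)) ∧
      (∀ F ∈ Ht, (fun z => (starRingEnd ℂ) (F ((starRingEnd ℂ) z))) ∈ Ht) ∧
      -- (iii) 𝓗̃ violates (H2): some point evaluation is discontinuous
      (∃ (z₀ : ℂ) (G : ℂ → ℂ) (F : ℕ → ℂ → ℂ),
        G ∈ Ht ∧ (∀ k : ℕ, F k ∈ Ht) ∧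
        Filter.Tendsto (fun k => ∑' n : ℕ, μ n * ‖F k (t n) - G (t n)‖ ^ 2)
          Filter.atTop (nhds 0) ∧
        ¬ Filter.Tendsto (fun k => F k z₀) Filter.atTop (nhds (G z₀))) ∧
      -- (iv) 𝓗 ∩ 𝓗̃ is dense in 𝓗 and 𝓗̃ (via the isometries with ℓ²(μ))
      (∀ v : ℕ → ℂ, Meml2 μ v → ∀ ε : ℝ, 0 < ε →
        ∃ F, F ∈ H ∧ F ∈ Ht ∧
          Real.sqrt (∑' n : ℕ, μ n * ‖v n - F (t n)‖ ^ 2) < ε) :=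
  exists_space_satisfying_H1_H3_but_not_H2_general μ hμ t hdisc H hH0 hHadd hHsmul hHentire hHl2
    hHinj hHsurj hH1 hH2 hH3
end
end
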